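/- arXiv:2402.15778 — 6 statements merged into one kernel-verified Lean document; each statement's English description precedes it below -/
import Mathlib

section
/- Let G be a nontrivial connected graph and v \in V(G). Form G_{k,l} by attaching two internally disjoint paths P = v v_1 ... v_k and Q = v u_1 ... u_l of lengths k and l at v (all new vertices distinct from V(G)). If l \ge k \ge 1, then W(G_{k,l}) < W(G_{k-1,l+1}). -/
open SimpleGraph Finset

/-- Wiener index: sum of distances over unordered pairs. -/
noncomputable def wiener {V : Type*} [Fintype V] (G : SimpleGraph V) : ℕ :=
  (∑ u : V, ∑ v : V, G.dist u v) / 2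

/-- Sum of distances from a vertex. -/
noncomputable def distSum {V : Type*} [Fintype V] (G : SimpleGraph V) (u : V) : ℕ :=
  ∑ v : V, G.dist u v

/-- Distance between two vertex subsets. -/
noncomputable def setDist {V : Type*} (G : SimpleGraph V) (A B : Finset V) : ℕ :=
  sInf {d | ∃ x ∈ A, ∃ y ∈ B, G.dist x y = d}

/-- Conditional diameter `D(G; s)`. -/
noncomputable def condDiam {V : Type*} (G : SimpleGraph V) (s : ℕ) : ℕ :=
  sSup {d | ∃ A B : Finset V, A.card = s ∧ B.card = s ∧ setDist G A B = d}

/-- `T^i_n` (1-based `i`): path `x_1 … x_{n-1}` (vertices `0,…,n-2`) with a pendant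
vertex (vertex `n-1`) attached to `x_i` (vertex `i-1`). -/
def Tpend (n i : ℕ) : SimpleGraph (Fin n) :=
  SimpleGraph.fromRel (fun u v =>
    (u.val + 1 = v.val ∧ v.val ≤ n - 2) ∨ (u.val = i - 1 ∧ v.val = n - 1))

/-- `T^{i,j}_n` (1-based): path `x_1 … x_{n-2}` (vertices `0,…,n-3`) with pendant
vertices `n-2` attached to `x_i` and `n-1` attached to `x_j`. -/
def Tpend2 (n i j : ℕ) : SimpleGraph (Fin n) :=
  SimpleGraph.fromRel (fun u v =>
    (u.val + 1 = v.val ∧ v.val ≤ n - 3) ∨ (u.val = i - 1 ∧ v.val = n - 2) ∨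
      (u.val = j - 1 ∧ v.val = n - 1))

/-- `T^{i(2)}_n` (1-based): path `x_1 … x_{n-2}` with a pendant path `x_i - w_1 - w_2`
(`w_1 = n-2`, `w_2 = n-1`). -/
def TpendPath2 (n i : ℕ) : SimpleGraph (Fin n) :=
  SimpleGraph.fromRel (fun u v =>
    (u.val + 1 = v.val ∧ v.val ≤ n - 3) ∨ (u.val = i - 1 ∧ v.val = n - 2) ∨
      (u.val = n - 2 ∧ v.val = n - 1))

/-- `G_{k,l}`: attach two pendant paths of lengths `k` and `l` at `v`. -/
def attachPaths {V : Type*} (G : SimpleGraph V) (v : V) (k l : ℕ) :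
    SimpleGraph (V ⊕ (Fin k ⊕ Fin l)) :=
  SimpleGraph.fromRel (fun a b =>
    match a, b with
    | Sum.inl x, Sum.inl y => G.Adj x y
    | Sum.inl x, Sum.inr (Sum.inl p) => x = v ∧ p.val = 0
    | Sum.inl x, Sum.inr (Sum.inr q) => x = v ∧ q.val = 0
    | Sum.inr (Sum.inl p), Sum.inr (Sum.inl p') => p.val + 1 = p'.val
    | Sum.inr (Sum.inr q), Sum.inr (Sum.inr q') => q.val + 1 = q'.val
    | _, _ => False)



namespace Stmt3Aux

open SimpleGraph.Walk

variable {V : Type*}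

/-- Intended distance function on `attachPaths`. -/
noncomputable def Dd (G : SimpleGraph V) (v : V) {k l : ℕ} :
    V ⊕ (Fin k ⊕ Fin l) → V ⊕ (Fin k ⊕ Fin l) → ℕ
  | Sum.inl x, Sum.inl y => G.dist x y
  | Sum.inl x, Sum.inr (Sum.inl p) => G.dist x v + p.val + 1
  | Sum.inl x, Sum.inr (Sum.inr q) => G.dist x v + q.val + 1
  | Sum.inr (Sum.inl p), Sum.inl y => G.dist y v + p.val + 1
  | Sum.inr (Sum.inr q), Sum.inl y => G.dist y v + q.val + 1
  | Sum.inr (Sum.inl p), Sum.inr (Sum.inl p') => (p.val - p'.val) + (p'.val - p.val)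
  | Sum.inr (Sum.inl p), Sum.inr (Sum.inr q) => p.val + q.val + 2
  | Sum.inr (Sum.inr q), Sum.inr (Sum.inl p) => p.val + q.val + 2
  | Sum.inr (Sum.inr q), Sum.inr (Sum.inr q') => (q.val - q'.val) + (q'.val - q.val)

lemma Dd_self (G : SimpleGraph V) (v : V) {k l : ℕ} (a : V ⊕ (Fin k ⊕ Fin l)) :
    Dd G v a a = 0 := by
  rcases a with x | (p | q) <;> simp [Dd]

/-- Generic Lipschitz walk bound. -/
lemma lip_walk {α : Type*} {H : SimpleGraph α} (f : α → ℕ)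
    (hf : ∀ a b, H.Adj a b → f a ≤ f b + 1) {a t : α} (w : H.Walk a t) :
    f a ≤ f t + w.length := by
  induction w with
  | nil => simp
  | cons h p ih =>
    have := hf _ _ h
    simp only [Walk.length_cons]
    omega

lemma Dd_lip (G : SimpleGraph V) (hG : G.Connected) (v : V) {k l : ℕ}
    (t a b : V ⊕ (Fin k ⊕ Fin l)) (hab : (attachPaths G v k l).Adj a b) :
    Dd G v a t ≤ Dd G v b t + 1 := by
  rw [attachPaths, fromRel_adj] at hab
  obtain ⟨hne, hab⟩ := hab
  rcases a with x | (p | q) <;> rcases b with y | (p' | q') <;>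
      simp only [false_or, or_false] at hab <;>
    rcases t with z | (r | r') <;> simp only [Dd]
  all_goals first
  | omega
  | (have hadj : G.Adj x y := by tauto
     have h1 := hG.dist_triangle (u := x) (v := y) (w := z)
     have h2 : G.dist x y ≤ 1 := by
       simpa using SimpleGraph.dist_le (Walk.cons hadj Walk.nil)
     omega)
  | (have hadj : G.Adj x y := by tauto
     have h1 := hG.dist_triangle (u := x) (v := y) (w := v)
     have h2 : G.dist x y ≤ 1 := by
       simpa using SimpleGraph.dist_le (Walk.cons hadj Walk.nil)
     omega)
  | (obtain ⟨h0x, h0⟩ := hab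
     first
      | (have hc : G.dist x z = G.dist z v := by rw [h0x, SimpleGraph.dist_comm]
         omega)
      | (have hc : G.dist y z = G.dist z v := by rw [h0x, SimpleGraph.dist_comm]
         omega)
      | (have hd : G.dist x v = 0 := by rw [h0x]; exact SimpleGraph.dist_self
         omega)
      | (have hd : G.dist y v = 0 := by rw [h0x]; exact SimpleGraph.dist_self
         omega)
      | omega)


def homInl (G : SimpleGraph V) (v : V) (k l : ℕ) : G →g attachPaths G v k l where
  toFun := Sum.inl
  map_rel' := by
    intro a b h
    rw [attachPaths, SimpleGraph.fromRel_adj]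
    exact ⟨by simp [h.ne], Or.inl h⟩

lemma adjS (G : SimpleGraph V) (v : V) (k l : ℕ) (p : ℕ) (hp : p + 1 < k)
    (hp' : p < k) :
    (attachPaths G v k l).Adj (Sum.inr (Sum.inl ⟨p+1, hp⟩)) (Sum.inr (Sum.inl ⟨p, hp'⟩)) := by
  rw [attachPaths, SimpleGraph.fromRel_adj]
  refine ⟨by simp only [ne_eq, Sum.inr.injEq, Sum.inl.injEq, Fin.mk.injEq]; omega, Or.inr rfl⟩

lemma adjL (G : SimpleGraph V) (v : V) (k l : ℕ) (q : ℕ) (hq : q + 1 < l)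
    (hq' : q < l) :
    (attachPaths G v k l).Adj (Sum.inr (Sum.inr ⟨q+1, hq⟩)) (Sum.inr (Sum.inr ⟨q, hq'⟩)) := by
  rw [attachPaths, SimpleGraph.fromRel_adj]
  refine ⟨by simp only [ne_eq, Sum.inr.injEq, Fin.mk.injEq]; omega, Or.inr rfl⟩

def shortWalk (G : SimpleGraph V) (v : V) (k l : ℕ) :
    (p : ℕ) → (hp : p < k) →
      (attachPaths G v k l).Walk (Sum.inr (Sum.inl ⟨p, hp⟩)) (Sum.inl v)
  | 0, hp => Walk.cons (by
      rw [attachPaths, SimpleGraph.fromRel_adj]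
      exact ⟨by simp, Or.inr ⟨rfl, rfl⟩⟩) Walk.nil
  | p+1, hp => Walk.cons (adjS G v k l p hp (by omega)) (shortWalk G v k l p (by omega))

lemma shortWalk_length (G : SimpleGraph V) (v : V) (k l : ℕ) :
    ∀ (p : ℕ) (hp : p < k), (shortWalk G v k l p hp).length = p + 1
  | 0, hp => by simp [shortWalk]
  | p+1, hp => by simp [shortWalk, shortWalk_length G v k l p (by omega)]

def longWalk (G : SimpleGraph V) (v : V) (k l : ℕ) :
    (q : ℕ) → (hq : q < l) →
      (attachPaths G v k l).Walk (Sum.inr (Sum.inr ⟨q, hq⟩)) (Sum.inl v)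
  | 0, hq => Walk.cons (by
      rw [attachPaths, SimpleGraph.fromRel_adj]
      exact ⟨by simp, Or.inr ⟨rfl, rfl⟩⟩) Walk.nil
  | q+1, hq => Walk.cons (adjL G v k l q hq (by omega)) (longWalk G v k l q (by omega))

lemma longWalk_length (G : SimpleGraph V) (v : V) (k l : ℕ) :
    ∀ (q : ℕ) (hq : q < l), (longWalk G v k l q hq).length = q + 1
  | 0, hq => by simp [longWalk]
  | q+1, hq => by simp [longWalk, longWalk_length G v k l q (by omega)]

def upWalkS (G : SimpleGraph V) (v : V) (k l : ℕ) :
    (p d : ℕ) → (h : p + d < k) →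
      (attachPaths G v k l).Walk (Sum.inr (Sum.inl ⟨p, by omega⟩))
        (Sum.inr (Sum.inl ⟨p + d, h⟩))
  | p, 0, h => Walk.nil
  | p, d+1, h => (upWalkS G v k l p d (by omega)).concat ((adjS G v k l (p+d) (by omega) (by omega)).symm)

lemma upWalkS_length (G : SimpleGraph V) (v : V) (k l : ℕ) :
    ∀ (p d : ℕ) (h : p + d < k), (upWalkS G v k l p d h).length = d
  | p, 0, h => by simp [upWalkS]
  | p, d+1, h => by
      simp [upWalkS, Walk.length_concat, upWalkS_length G v k l p d (by omega)]

def upWalkL (G : SimpleGraph V) (v : V) (k l : ℕ) :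
    (q d : ℕ) → (h : q + d < l) →
      (attachPaths G v k l).Walk (Sum.inr (Sum.inr ⟨q, by omega⟩))
        (Sum.inr (Sum.inr ⟨q + d, h⟩))
  | q, 0, h => Walk.nil
  | q, d+1, h => (upWalkL G v k l q d (by omega)).concat ((adjL G v k l (q+d) (by omega) (by omega)).symm)

lemma upWalkL_length (G : SimpleGraph V) (v : V) (k l : ℕ) :
    ∀ (q d : ℕ) (h : q + d < l), (upWalkL G v k l q d h).length = d
  | q, 0, h => by simp [upWalkL]
  | q, d+1, h => by
      simp [upWalkL, Walk.length_concat, upWalkL_length G v k l q d (by omega)]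


@[simp] lemma homInl_apply (G : SimpleGraph V) (v : V) (k l : ℕ) (x : V) :
    homInl G v k l x = Sum.inl x := rfl

lemma reach_v (G : SimpleGraph V) (hG : G.Connected) (v : V) {k l : ℕ}
    (a : V ⊕ (Fin k ⊕ Fin l)) : (attachPaths G v k l).Reachable a (Sum.inl v) := by
  rcases a with x | (⟨pv, hp⟩ | ⟨qv, hq⟩)
  · exact (hG.preconnected x v).elim fun w => ⟨w.map (homInl G v k l)⟩
  · exact ⟨shortWalk G v k l pv hp⟩
  · exact ⟨longWalk G v k l qv hq⟩

lemma Dd_le_dist (G : SimpleGraph V) (hG : G.Connected) (v : V) {k l : ℕ}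
    (a b : V ⊕ (Fin k ⊕ Fin l)) :
    Dd G v a b ≤ (attachPaths G v k l).dist a b := by
  have hr : (attachPaths G v k l).Reachable a b :=
    (reach_v G hG v a).trans (reach_v G hG v b).symm
  obtain ⟨w, hw⟩ := hr.exists_walk_length_eq_dist
  have h := lip_walk (fun z => Dd G v z b) (fun a' b' h => Dd_lip G hG v b a' b' h) w
  rw [hw] at h
  simpa [Dd_self] using h

lemma distS_le (G : SimpleGraph V) (hG : G.Connected) (v : V) {k l : ℕ}
    (pa d : ℕ) (h : pa + d < k) :
    (attachPaths G v k l).dist (Sum.inr (Sum.inl ⟨pa, by omega⟩))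
      (Sum.inr (Sum.inl ⟨pa + d, h⟩)) ≤ d := by
  have := SimpleGraph.dist_le (upWalkS G v k l pa d h)
  rwa [upWalkS_length] at this

lemma distL_le (G : SimpleGraph V) (hG : G.Connected) (v : V) {k l : ℕ}
    (qa d : ℕ) (h : qa + d < l) :
    (attachPaths G v k l).dist (Sum.inr (Sum.inr ⟨qa, by omega⟩))
      (Sum.inr (Sum.inr ⟨qa + d, h⟩)) ≤ d := by
  have := SimpleGraph.dist_le (upWalkL G v k l qa d h)
  rwa [upWalkL_length] at this

lemma distVV_le (G : SimpleGraph V) (hG : G.Connected) (v : V) {k l : ℕ} (x y : V) :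
    (attachPaths G v k l).dist (Sum.inl x) (Sum.inl y) ≤ G.dist x y := by
  obtain ⟨w, hw⟩ := (hG.preconnected x y).exists_walk_length_eq_dist
  have := SimpleGraph.dist_le (w.map (homInl G v k l))
  rw [Walk.length_map, hw] at this
  simpa using this

lemma distVS_le (G : SimpleGraph V) (hG : G.Connected) (v : V) {k l : ℕ}
    (x : V) (pv : ℕ) (hp : pv < k) :
    (attachPaths G v k l).dist (Sum.inl x) (Sum.inr (Sum.inl ⟨pv, hp⟩))
      ≤ G.dist x v + pv + 1 := by
  obtain ⟨w, hw⟩ := (hG.preconnected x v).exists_walk_length_eq_dist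
  have := SimpleGraph.dist_le ((w.map (homInl G v k l)).append
    (shortWalk G v k l pv hp).reverse)
  erw [Walk.length_append, Walk.length_reverse, Walk.length_map, hw,
    shortWalk_length] at this
  simp only [homInl_apply] at this
  exact this.trans (by omega)

lemma distVL_le (G : SimpleGraph V) (hG : G.Connected) (v : V) {k l : ℕ}
    (x : V) (qv : ℕ) (hq : qv < l) :
    (attachPaths G v k l).dist (Sum.inl x) (Sum.inr (Sum.inr ⟨qv, hq⟩))
      ≤ G.dist x v + qv + 1 := by
  obtain ⟨w, hw⟩ := (hG.preconnected x v).exists_walk_length_eq_dist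
  have := SimpleGraph.dist_le ((w.map (homInl G v k l)).append
    (longWalk G v k l qv hq).reverse)
  erw [Walk.length_append, Walk.length_reverse, Walk.length_map, hw,
    longWalk_length] at this
  simp only [homInl_apply] at this
  exact this.trans (by omega)

lemma distSL_le (G : SimpleGraph V) (hG : G.Connected) (v : V) {k l : ℕ}
    (pv : ℕ) (hp : pv < k) (qv : ℕ) (hq : qv < l) :
    (attachPaths G v k l).dist (Sum.inr (Sum.inl ⟨pv, hp⟩)) (Sum.inr (Sum.inr ⟨qv, hq⟩))
      ≤ pv + qv + 2 := by
  have := SimpleGraph.dist_le ((shortWalk G v k l pv hp).append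
    (longWalk G v k l qv hq).reverse)
  rw [Walk.length_append, Walk.length_reverse, shortWalk_length, longWalk_length] at this
  omega

lemma dist_le_Dd (G : SimpleGraph V) (hG : G.Connected) (v : V) {k l : ℕ}
    (a b : V ⊕ (Fin k ⊕ Fin l)) :
    (attachPaths G v k l).dist a b ≤ Dd G v a b := by
  rcases a with x | (⟨pv, hp⟩ | ⟨qv, hq⟩) <;> rcases b with y | (⟨pv', hp'⟩ | ⟨qv', hq'⟩) <;>
    simp only [Dd]
  · exact distVV_le G hG v x y
  · exact distVS_le G hG v x pv' hp'
  · exact distVL_le G hG v x qv' hq'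
  · rw [SimpleGraph.dist_comm]
    exact distVS_le G hG v y pv hp
  · rcases le_total pv pv' with h | h
    · have h2 := distS_le G hG v (k := k) (l := l) pv (pv' - pv) (by omega)
      have he : pv + (pv' - pv) = pv' := by omega
      simp only [he] at h2
      refine le_trans h2 ?_
      omega
    · rw [SimpleGraph.dist_comm]
      have h2 := distS_le G hG v (k := k) (l := l) pv' (pv - pv') (by omega)
      have he : pv' + (pv - pv') = pv := by omega
      simp only [he] at h2
      refine le_trans h2 ?_
      omega
  · exact distSL_le G hG v pv hp qv' hq'
  · rw [SimpleGraph.dist_comm]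
    exact distVL_le G hG v y qv hq
  · rw [SimpleGraph.dist_comm]
    have := distSL_le G hG v pv' hp' qv hq
    exact le_trans this (by omega)
  · rcases le_total qv qv' with h | h
    · have h2 := distL_le G hG v (k := k) (l := l) qv (qv' - qv) (by omega)
      have he : qv + (qv' - qv) = qv' := by omega
      simp only [he] at h2
      refine le_trans h2 ?_
      omega
    · rw [SimpleGraph.dist_comm]
      have h2 := distL_le G hG v (k := k) (l := l) qv' (qv - qv') (by omega)
      have he : qv' + (qv - qv') = qv := by omega
      simp only [he] at h2
      refine le_trans h2 ?_
      omega

lemma dist_eq_Dd (G : SimpleGraph V) (hG : G.Connected) (v : V) {k l : ℕ}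
    (a b : V ⊕ (Fin k ⊕ Fin l)) :
    (attachPaths G v k l).dist a b = Dd G v a b :=
  le_antisymm (dist_le_Dd G hG v a b) (Dd_le_dist G hG v a b)


def Tf (k : ℕ) : ℕ := ∑ i ∈ Finset.range k, (i+1)
def Qf (k : ℕ) : ℕ := ∑ p ∈ Finset.range k, ∑ q ∈ Finset.range k, ((p - q) + (q - p))
def Rf (k l : ℕ) : ℕ := ∑ p ∈ Finset.range k, ∑ q ∈ Finset.range l, (p + q + 2)
def gf (n s svv k l : ℕ) : ℕ :=
  svv + 2*(k*s + n * Tf k) + 2*(l*s + n * Tf l) + Qf k + Qf l + 2 * Rf k l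

lemma sum_Dd [Fintype V] (G : SimpleGraph V) (v : V) (k l : ℕ) :
    ∑ a : V ⊕ (Fin k ⊕ Fin l), ∑ b : V ⊕ (Fin k ⊕ Fin l), Dd G v a b
      = gf (Fintype.card V) (∑ x : V, G.dist x v) (∑ x : V, ∑ y : V, G.dist x y) k l := by
  simp only [Fintype.sum_sum_type, Dd, Fin.sum_univ_eq_sum_range]
  simp only [gf, Tf, Qf, Rf]
  simp only [Finset.sum_add_distrib, Finset.sum_const, Finset.card_range, smul_eq_mul,
    Finset.card_univ, mul_one, ← Finset.mul_sum]
  simp only [Fintype.card_fin, Fin.sum_univ_eq_sum_range, Finset.sum_add_distrib,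
    Finset.sum_const, Finset.card_range, smul_eq_mul, ← Finset.mul_sum]
  have e1 : (∑ x : Fin k, (x:ℕ)) = ∑ i ∈ Finset.range k, i :=
    Fin.sum_univ_eq_sum_range (fun i => i) k
  have e2 : (∑ x : Fin l, (x:ℕ)) = ∑ i ∈ Finset.range l, i :=
    Fin.sum_univ_eq_sum_range (fun i => i) l
  have e3 : (∑ x : Fin k, ∑ i ∈ Finset.range k, ((x:ℕ) - i))
      = ∑ j ∈ Finset.range k, ∑ i ∈ Finset.range k, (j - i) :=
    Fin.sum_univ_eq_sum_range (fun j => ∑ i ∈ Finset.range k, (j - i)) k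
  have e4 : (∑ x : Fin l, ∑ i ∈ Finset.range l, ((x:ℕ) - i))
      = ∑ j ∈ Finset.range l, ∑ i ∈ Finset.range l, (j - i) :=
    Fin.sum_univ_eq_sum_range (fun j => ∑ i ∈ Finset.range l, (j - i)) l
  have e5 : (∑ x : Fin k, ∑ y : Fin k, ((y:ℕ) - (x:ℕ)))
      = ∑ j ∈ Finset.range k, ∑ i ∈ Finset.range k, (i - j) := by
    rw [Fin.sum_univ_eq_sum_range (fun j => ∑ y : Fin k, ((y:ℕ) - j)) k]
    exact Finset.sum_congr rfl fun j _ => Fin.sum_univ_eq_sum_range (fun i => i - j) k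
  have e6 : (∑ x : Fin l, ∑ y : Fin l, ((y:ℕ) - (x:ℕ)))
      = ∑ j ∈ Finset.range l, ∑ i ∈ Finset.range l, (i - j) := by
    rw [Fin.sum_univ_eq_sum_range (fun j => ∑ y : Fin l, ((y:ℕ) - j)) l]
    exact Finset.sum_congr rfl fun j _ => Fin.sum_univ_eq_sum_range (fun i => i - j) l
  have ec : ∀ (c m : ℕ), ∑ y ∈ Finset.range m, (c + y) = m * c + ∑ y ∈ Finset.range m, y := by
    intro c m
    induction m with
    | zero => simp
    | succ n ih => rw [Finset.sum_range_succ, ih, Finset.sum_range_succ]; ring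
  have e7 : (∑ x ∈ Finset.range k, ∑ y ∈ Finset.range l, (x + y))
      = l * ∑ x ∈ Finset.range k, x + k * ∑ y ∈ Finset.range l, y := by
    rw [Finset.sum_congr rfl fun x _ => ec x l, Finset.sum_add_distrib, ← Finset.mul_sum,
      Finset.sum_const, Finset.card_range, smul_eq_mul]
    try ring
  rw [e1, e2, e3, e4, e5, e6, e7]
  ring


lemma sum_shift (c j : ℕ) : ∑ i ∈ Finset.range j, (c + i) = j * c + ∑ i ∈ Finset.range j, i := by
  induction j with
  | zero => simp
  | succ n ih => rw [Finset.sum_range_succ, ih, Finset.sum_range_succ]; ring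

lemma sum_rev (j : ℕ) : ∑ i ∈ Finset.range j, (j - i) = Tf j := by
  rw [Tf, ← Finset.sum_range_reflect]
  exact Finset.sum_congr rfl fun i hi => by
    rw [Finset.mem_range] at hi; omega

lemma Qf_succ (j : ℕ) : Qf (j+1) = Qf j + 2 * Tf j := by
  rw [Qf, Finset.sum_range_succ]
  have h2 : ∀ p ∈ Finset.range j, (∑ q ∈ Finset.range (j+1), ((p - q) + (q - p)))
      = (∑ q ∈ Finset.range j, ((p - q) + (q - p))) + (j - p) := by
    intro p hp
    rw [Finset.sum_range_succ, Finset.mem_range] at *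
    congr 1
    omega
  rw [Finset.sum_congr rfl h2, Finset.sum_add_distrib, sum_rev]
  have h3 : (∑ q ∈ Finset.range (j+1), ((j - q) + (q - j)))
      = ∑ q ∈ Finset.range j, (j - q) := by
    rw [Finset.sum_range_succ]
    have : ∀ q ∈ Finset.range j, ((j - q) + (q - j)) = j - q := by
      intro q hq; rw [Finset.mem_range] at hq; omega
    rw [Finset.sum_congr rfl this]
    simp
  rw [h3, sum_rev, Qf]
  ring

lemma Tf_eq (j : ℕ) : Tf j = (∑ i ∈ Finset.range j, i) + j := by
  simp [Tf, Finset.sum_add_distrib, Finset.sum_const, Finset.card_range]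

lemma gf_step (n s svv m l : ℕ) (hn : 2 ≤ n) (hml : m + 1 ≤ l) :
    gf n s svv (m+1) l + 2 ≤ gf n s svv m (l+1) := by
  have fT1 : Tf (m+1) = Tf m + (m+1) := Finset.sum_range_succ _ m
  have fT2 : Tf (l+1) = Tf l + (l+1) := Finset.sum_range_succ _ l
  have fQ1 := Qf_succ m
  have fQ2 := Qf_succ l
  have fR1 : Rf (m+1) l = Rf m l + (l * (m+2) + ∑ i ∈ Finset.range l, i) := by
    rw [Rf, Finset.sum_range_succ, ← Rf]
    congr 1
    rw [Finset.sum_congr rfl fun q hq => (by omega : (m + q + 2) = ((m+2) + q)),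
      sum_shift]
  have fR2 : Rf m (l+1) = Rf m l + (m * (l+2) + ∑ i ∈ Finset.range m, i) := by
    rw [Rf, Finset.sum_congr rfl fun p _ => Finset.sum_range_succ _ l,
      Finset.sum_add_distrib, ← Rf]
    congr 1
    rw [Finset.sum_congr rfl fun p hp => (by omega : (p + l + 2) = ((l+2) + p)),
      sum_shift]
  have key : n*m + l + 1 ≤ n*l + m := by
    obtain ⟨n', rfl⟩ : ∃ n', n = n' + 2 := ⟨n - 2, by omega⟩
    obtain ⟨d, rfl⟩ : ∃ d, l = m + 1 + d := ⟨l - (m+1), by omega⟩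
    nlinarith [Nat.zero_le (n' * d)]
  rw [gf, gf, fT1, fT2, fQ1, fQ2, fR1, fR2, Tf_eq m, Tf_eq l]
  nlinarith [key]

end Stmt3Aux

theorem stmt3 {V : Type*} [Fintype V] (G : SimpleGraph V) (hG : G.Connected)
    (hnt : Nontrivial V) (v : V) (k l : ℕ) (hk : 1 ≤ k) (hkl : k ≤ l) :
    wiener (attachPaths G v k l) < wiener (attachPaths G v (k - 1) (l + 1)) := by
  obtain ⟨m, rfl⟩ : ∃ m, k = m + 1 := ⟨k - 1, by omega⟩
  have hred : wiener (attachPaths G v (m + 1 - 1) (l + 1))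
      = wiener (attachPaths G v m (l + 1)) := rfl
  rw [hred]
  have hn : 2 ≤ Fintype.card V := Fintype.one_lt_card_iff_nontrivial.mpr hnt
  have h1 : (∑ a : V ⊕ (Fin (m+1) ⊕ Fin l), ∑ b : V ⊕ (Fin (m+1) ⊕ Fin l),
        (attachPaths G v (m+1) l).dist a b)
      = Stmt3Aux.gf (Fintype.card V) (∑ x : V, G.dist x v)
          (∑ x : V, ∑ y : V, G.dist x y) (m+1) l := by
    simp only [Stmt3Aux.dist_eq_Dd G hG v]
    exact Stmt3Aux.sum_Dd G v (m+1) l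
  have h2 : (∑ a : V ⊕ (Fin m ⊕ Fin (l+1)), ∑ b : V ⊕ (Fin m ⊕ Fin (l+1)),
        (attachPaths G v m (l+1)).dist a b)
      = Stmt3Aux.gf (Fintype.card V) (∑ x : V, G.dist x v)
          (∑ x : V, ∑ y : V, G.dist x y) m (l+1) := by
    simp only [Stmt3Aux.dist_eq_Dd G hG v]
    exact Stmt3Aux.sum_Dd G v m (l+1)
  have hstep := Stmt3Aux.gf_step (Fintype.card V) (∑ x : V, G.dist x v)
    (∑ x : V, ∑ y : V, G.dist x y) m l hn (by omega)
  simp only [wiener]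
  rw [h1, h2]
  omega
end

section
/- Among all trees on n vertices, the path P_n has the maximum Wiener index; that is, for every tree T on n vertices, W(T) \le W(P_n), with equality if and only if T \cong P_n. -/
open SimpleGraph Finset

namespace WienerPathAux

set_option linter.unusedSectionVars false

section Aux
variable {V : Type} [Fintype V] {G : SimpleGraph V}

lemma exists_adj_dist_pred {v y : V} (h : G.dist v y ≠ 0) :
    ∃ z, G.Adj z y ∧ G.dist v z + 1 = G.dist v y := by
  have hr : G.Reachable v y := SimpleGraph.Reachable.of_dist_ne_zero h
  obtain ⟨p, hp⟩ := hr.exists_walk_length_eq_dist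
  have hne : y ≠ v := by rintro rfl; simp [SimpleGraph.dist_self] at h
  obtain ⟨z, hadj, q, hq⟩ := p.reverse.exists_eq_cons_of_ne hne
  have hlen : q.length + 1 = G.dist v y := by
    have := congrArg SimpleGraph.Walk.length hq
    rw [SimpleGraph.Walk.length_reverse] at this
    simp only [SimpleGraph.Walk.length_cons] at this
    omega
  refine ⟨z, hadj.symm, ?_⟩
  have h1 : G.dist v z ≤ q.length := by
    simpa using SimpleGraph.dist_le q.reverse
  have h2 : G.dist v y ≤ G.dist v z + 1 := by
    obtain ⟨r, hr'⟩ := (SimpleGraph.Reachable.exists_walk_length_eq_dist ⟨q.reverse⟩)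
    have := SimpleGraph.dist_le (r.concat hadj.symm)
    rwa [SimpleGraph.Walk.length_concat, hr'] at this
  omega

lemma dist_lt_card (hconn : G.Connected) (u v : V) : G.dist u v < Fintype.card V := by
  obtain ⟨p, hp, hl⟩ := hconn.exists_path_of_dist u v
  exact hl ▸ hp.length_lt

end Aux

section Count
variable {V : Type} [Fintype V] {n : ℕ} {f : V → ℕ}

lemma attained_of_le (hgap : ∀ k, (∃ x, f x = k + 1) → ∃ x, f x = k) :
    ∀ m, (∃ x, f x = m) → ∀ j, j ≤ m → ∃ x, f x = j := by
  intro m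
  induction m with
  | zero => intro h j hj; simpa [Nat.le_zero.mp hj] using h
  | succ m ih =>
    intro h j hj
    rcases Nat.lt_or_ge j (m+1) with h' | h'
    · exact ih (hgap m h) j (by omega)
    · exact (by omega : j = m + 1) ▸ h

lemma card_le_filter_le
    (hcard : Fintype.card V = n)
    (hgap : ∀ k, (∃ x, f x = k + 1) → ∃ x, f x = k)
    {k : ℕ} (hk : k < n) :
    k + 1 ≤ #(univ.filter fun x => f x ≤ k) := by
  classical
  by_cases hex : ∃ x, k + 1 ≤ f x
  · obtain ⟨x0, hx0⟩ := hex
    have hall : ∀ j : ℕ, ∃ x, f x = min j k := fun j =>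
      attained_of_le hgap (f x0) ⟨x0, rfl⟩ _ (by omega)
    choose w hw using hall
    have : (range (k+1)).card ≤ #(univ.filter fun x => f x ≤ k) := by
      apply Finset.card_le_card_of_injOn w
      · intro j hj
        simp only [Finset.coe_range, Set.mem_Iio, Finset.mem_range] at hj
        simp only [Finset.mem_coe, Finset.mem_filter, Finset.mem_univ, true_and, hw j]
        omega
      · intro a ha b hb hab
        simp only [Finset.coe_range, Set.mem_Iio] at ha hb
        have h1 := hw a; have h2 := hw b
        rw [hab, h2] at h1
        omega
    simpa using this
  · push_neg at hex
    have : (univ.filter fun x => f x ≤ k) = univ := by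
      ext x; simp only [Finset.mem_filter, Finset.mem_univ, true_and, iff_true]
      have := hex x; omega
    rw [this]; simp only [Finset.card_univ, hcard]; omega

lemma sum_eq_sum_counts (hub : ∀ x, f x < n) :
    ∑ x, f x = ∑ k ∈ range n, #(univ.filter fun x => k < f x) := by
  classical
  have h1 : ∀ x, f x = ∑ k ∈ range n, if k < f x then 1 else 0 := by
    intro x
    rw [← Finset.card_filter]
    have : (range n).filter (fun k => k < f x) = range (f x) := by
      ext k
      simp only [Finset.mem_filter, Finset.mem_range]
      have := hub x; omega
    rw [this, Finset.card_range]
  calc ∑ x, f x = ∑ x, ∑ k ∈ range n, if k < f x then 1 else 0 := by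
        exact Finset.sum_congr rfl fun x _ => h1 x
    _ = ∑ k ∈ range n, ∑ x, if k < f x then 1 else 0 := Finset.sum_comm
    _ = ∑ k ∈ range n, #(univ.filter fun x => k < f x) := by
        exact Finset.sum_congr rfl fun k _ => (Finset.card_filter _ _).symm

lemma key_count (hcard : Fintype.card V = n) (hub : ∀ x, f x < n)
    (hgap : ∀ k, (∃ x, f x = k + 1) → ∃ x, f x = k) :
    ∑ x, f x ≤ ∑ k ∈ range n, k ∧
      (∑ x, f x = ∑ k ∈ range n, k → ∀ k, k < n → ∃! x, f x = k) := by
  classical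
  have hsplit : ∀ k : ℕ, #(univ.filter fun x => k < f x) + #(univ.filter fun x => f x ≤ k) = n := by
    intro k
    have := Finset.card_filter_add_card_filter_not (s := (univ : Finset V))
      (p := fun x => k < f x)
    simp only [not_lt, Finset.card_univ, hcard] at this
    convert this using 3 <;> simp [not_lt]
  have hterm : ∀ k ∈ range n, #(univ.filter fun x => k < f x) ≤ n - 1 - k := by
    intro k hk
    rw [Finset.mem_range] at hk
    have := card_le_filter_le hcard hgap hk
    have := hsplit k
    omega
  have hrefl : ∑ k ∈ range n, (n - 1 - k) = ∑ k ∈ range n, k := by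
    simpa using Finset.sum_range_reflect (fun j => j) n
  have hle : ∑ x, f x ≤ ∑ k ∈ range n, k := by
    rw [sum_eq_sum_counts hub, ← hrefl]
    exact Finset.sum_le_sum hterm
  refine ⟨hle, fun heq k hk => ?_⟩
  have hall : ∀ j ∈ range n, #(univ.filter fun x => j < f x) = n - 1 - j := by
    rw [sum_eq_sum_counts hub, ← hrefl] at heq
    exact fun j hj => (Finset.sum_eq_sum_iff_of_le hterm).mp heq j hj
  have hle' : ∀ j, j < n → #(univ.filter fun x => f x ≤ j) = j + 1 := by
    intro j hj
    have h1 := hall j (Finset.mem_range.mpr hj)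
    have h2 := hsplit j
    omega
  have hfib : #(univ.filter fun x => f x = k) = 1 := by
    rcases Nat.eq_zero_or_pos k with rfl | hkpos
    · have h1 := hle' 0 hk
      have h2 : (univ.filter fun x => f x ≤ 0) = (univ.filter fun x => f x = 0) := by
        apply Finset.filter_congr; intro x _; simp [Nat.le_zero]
      rw [h2] at h1
      exact h1
    · obtain ⟨m, rfl⟩ : ∃ m, k = m + 1 := ⟨k - 1, by omega⟩
      have h1 := hle' m (by omega)
      have h2 := hle' (m + 1) hk
      have hun : (univ.filter fun x => f x ≤ m + 1)
          = (univ.filter fun x => f x ≤ m) ∪ (univ.filter fun x => f x = m + 1) := by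
        ext x
        simp only [Finset.mem_filter, Finset.mem_univ, true_and, Finset.mem_union]
        omega
      have hdisj : Disjoint (univ.filter fun x => f x ≤ m) (univ.filter fun x => f x = m + 1) := by
        rw [Finset.disjoint_left]
        intro a ha hb
        simp only [Finset.mem_filter, Finset.mem_univ, true_and] at ha hb
        omega
      rw [hun, Finset.card_union_of_disjoint hdisj, h1] at h2
      omega
  obtain ⟨a, ha⟩ := Finset.card_eq_one.mp hfib
  refine ⟨a, ?_, ?_⟩
  · have : a ∈ univ.filter fun x => f x = k := ha ▸ Finset.mem_singleton_self a
    simpa using this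
  · intro b hb
    have : b ∈ univ.filter fun x => f x = k := by simpa using hb
    rw [ha] at this
    simpa using this

end Count

section Graph
variable {V : Type} [Fintype V] {G : SimpleGraph V} {n : ℕ}

lemma dist_facts (hconn : G.Connected) (v : V) (hcard : Fintype.card V = n) :
    ∑ y, G.dist v y ≤ ∑ k ∈ range n, k ∧
      (∑ y, G.dist v y = ∑ k ∈ range n, k → ∀ k, k < n → ∃! x, G.dist v x = k) :=
  key_count hcard (fun x => hcard ▸ dist_lt_card hconn v x)
    (fun k hk => by
      obtain ⟨y, hy⟩ := hk
      obtain ⟨z, _, hz⟩ := exists_adj_dist_pred (G := G) (v := v) (y := y) (by omega)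
      exact ⟨z, by omega⟩)

lemma iso_of_unique_dist (hconn : G.Connected) (v : V) (hcard : Fintype.card V = n)
    (H : ∀ k, k < n → ∃! x, G.dist v x = k) :
    Nonempty (G ≃g pathGraph n) := by
  have hub : ∀ x, G.dist v x < n := fun x => hcard ▸ dist_lt_card hconn v x
  let φ : V → Fin n := fun x => ⟨G.dist v x, hub x⟩
  have hinj : Function.Injective φ := by
    intro a b hab
    have h : G.dist v a = G.dist v b := congrArg Fin.val hab
    obtain ⟨x, -, hx⟩ := H (G.dist v a) (hub a)
    exact (hx a rfl).trans (hx b h.symm).symm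
  have hbij : Function.Bijective φ :=
    (Fintype.bijective_iff_injective_and_card φ).mpr ⟨hinj, by simp [hcard]⟩
  refine ⟨⟨Equiv.ofBijective φ hbij, ?_⟩⟩
  intro a b
  show (pathGraph n).Adj (φ a) (φ b) ↔ G.Adj a b
  rw [pathGraph_adj]
  show (G.dist v a + 1 = G.dist v b ∨ G.dist v b + 1 = G.dist v a) ↔ G.Adj a b
  constructor
  · rintro (h | h)
    · obtain ⟨z, hadj, hz⟩ := exists_adj_dist_pred (G := G) (v := v) (y := b) (by omega)
      have : z = a := hinj (by simp only [φ, Fin.mk.injEq]; omega)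
      exact this ▸ hadj
    · obtain ⟨z, hadj, hz⟩ := exists_adj_dist_pred (G := G) (v := v) (y := a) (by omega)
      have : z = b := hinj (by simp only [φ, Fin.mk.injEq]; omega)
      exact (this ▸ hadj).symm
  · intro hadj
    have h1 : G.dist v a ≤ G.dist v b + 1 := by
      have := hconn.dist_triangle (u := v) (v := b) (w := a)
      have h2 : G.dist b a = 1 := dist_eq_one_iff_adj.mpr hadj.symm
      omega
    have h2 : G.dist v b ≤ G.dist v a + 1 := by
      have := hconn.dist_triangle (u := v) (v := a) (w := b)
      have h2 : G.dist a b = 1 := dist_eq_one_iff_adj.mpr hadj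
      omega
    have h3 : G.dist v a ≠ G.dist v b := fun h =>
      hadj.ne (hinj (by simp only [φ, Fin.mk.injEq]; omega))
    omega

end Graph

section PathDist

/-- `|i - j|` in ℕ. -/
def pd (i j : ℕ) : ℕ := (i - j) + (j - i)

lemma pathGraph_dist_le {n : ℕ} : ∀ (d : ℕ) (i j : Fin n), i.val + d = j.val →
    (pathGraph n).dist i j ≤ d := by
  intro d
  induction d with
  | zero => intro i j h; have : i = j := Fin.ext (by omega); simp [this]
  | succ d ih =>
    intro i j h
    have hi1 : i.val + 1 < n := by omega
    let i' : Fin n := ⟨i.val + 1, hi1⟩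
    have hadj : (pathGraph n).Adj i i' := pathGraph_adj.mpr (Or.inl rfl)
    have h1 := ih i' j (by simp [i']; omega)
    have h2 : (pathGraph n).dist i i' = 1 := dist_eq_one_iff_adj.mpr hadj
    have hconn : (pathGraph n).Connected := by
      have : Nonempty (Fin n) := ⟨i⟩
      exact ⟨pathGraph_preconnected n⟩
    have := hconn.dist_triangle (u := i) (v := i') (w := j)
    omega

lemma pathGraph_walk_le {n : ℕ} {i j : Fin n} (p : (pathGraph n).Walk i j) :
    pd i.val j.val ≤ p.length := by
  induction p with
  | nil => simp [pd]
  | @cons u b w hadj q ih =>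
    rw [pathGraph_adj] at hadj
    simp only [SimpleGraph.Walk.length_cons]
    simp only [pd] at *
    omega

lemma pathGraph_dist {n : ℕ} (i j : Fin n) :
    (pathGraph n).dist i j = pd i.val j.val := by
  apply le_antisymm
  · rcases Nat.le_total i.val j.val with h | h
    · have := pathGraph_dist_le (j.val - i.val) i j (by omega)
      simp only [pd]; omega
    · have := pathGraph_dist_le (i.val - j.val) j i (by omega)
      rw [SimpleGraph.dist_comm]
      simp only [pd]; omega
  · obtain ⟨p, hp⟩ := SimpleGraph.Reachable.exists_walk_length_eq_dist
      (⟨(pathGraph_preconnected n i j).some⟩ : (pathGraph n).Reachable i j)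
    calc pd i.val j.val ≤ p.length := pathGraph_walk_le p
      _ = _ := hp

lemma sum_range_rev (n : ℕ) : ∑ i ∈ range n, (n - i) = ∑ k ∈ range (n+1), k := by
  have h := Finset.sum_range_reflect (fun k => k) (n+1)
  rw [Finset.sum_range_succ (fun j => n + 1 - 1 - j) n] at h
  have : ∀ j ∈ range n, n + 1 - 1 - j = n - j := by intro j _; omega
  rw [Finset.sum_congr rfl this] at h
  simp only [Nat.add_sub_cancel, Nat.sub_self, Nat.add_zero] at h
  exact h

/-- sum of all pairwise distances in the path graph -/
lemma p2_succ (n : ℕ) :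
    ∑ i : Fin (n+1), ∑ j : Fin (n+1), (pathGraph (n+1)).dist i j
      = (∑ i : Fin n, ∑ j : Fin n, (pathGraph n).dist i j) + 2 * ∑ k ∈ range (n+1), k := by
  have hpd : ∀ (m : ℕ) (i j : Fin m), (pathGraph m).dist i j = pd i.val j.val :=
    fun m => pathGraph_dist
  simp only [hpd]
  rw [Fin.sum_univ_castSucc]
  have h1 : ∀ i : Fin n, ∑ j : Fin (n+1), pd (i.castSucc).val j.val
      = (∑ j : Fin n, pd i.val j.val) + (n - i.val) := by
    intro i
    rw [Fin.sum_univ_castSucc]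
    simp [pd, Fin.coe_castSucc, Fin.val_last]
  have h2 : ∑ j : Fin (n+1), pd (Fin.last n).val j.val = ∑ k ∈ range (n+1), k := by
    rw [Fin.sum_univ_castSucc]
    simp only [Fin.val_last, Fin.coe_castSucc, pd]
    have : ∀ j : Fin n, (n - j.val) + (j.val - n) = n - j.val := by
      intro j; have := j.isLt; omega
    rw [Finset.sum_congr rfl (fun j _ => this j)]
    rw [Fin.sum_univ_eq_sum_range (fun k => n - k) n]
    rw [← sum_range_rev n]
    omega
  rw [Finset.sum_congr rfl (fun i _ => h1 i), h2, Finset.sum_add_distrib]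
  have h3 : ∑ i : Fin n, (n - i.val) = ∑ k ∈ range (n+1), k := by
    rw [Fin.sum_univ_eq_sum_range (fun k => n - k) n]
    exact sum_range_rev n
  rw [h3]; ring

lemma even_p2 (n : ℕ) : Even (∑ i : Fin n, ∑ j : Fin n, (pathGraph n).dist i j) := by
  induction n with
  | zero => simp
  | succ n ih =>
    rw [p2_succ n]
    exact ih.add (even_two_mul _)

end PathDist

section Leaf
variable {V : Type} [Fintype V] {T : SimpleGraph V}

lemma exists_leaf (hT : T.IsTree) (h2 : 2 ≤ Fintype.card V) :
    ∃ v : V, ∀ a b, T.Adj a v → T.Adj b v → a = b := by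
  classical
  by_contra hno
  push_neg at hno
  have hdeg : ∀ v : V, 2 ≤ T.degree v := by
    intro v
    obtain ⟨a, b, ha, hb, hab⟩ := hno v
    have haf : a ∈ T.neighborFinset v := by
      rw [SimpleGraph.mem_neighborFinset]; exact ha.symm
    have hbf : b ∈ T.neighborFinset v := by
      rw [SimpleGraph.mem_neighborFinset]; exact hb.symm
    have : ({a, b} : Finset V) ⊆ T.neighborFinset v := by
      intro x hx
      rcases Finset.mem_insert.mp hx with rfl | hx
      · exact haf
      · exact (Finset.mem_singleton.mp hx) ▸ hbf
    have hcard2 : ({a, b} : Finset V).card = 2 := Finset.card_pair hab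
    have := Finset.card_le_card this
    rw [hcard2] at this
    exact this
  have hsum := T.sum_degrees_eq_twice_card_edges
  have hcard := hT.card_edgeFinset
  have : 2 * Fintype.card V ≤ ∑ v : V, T.degree v :=
    calc 2 * Fintype.card V = ∑ _v : V, 2 := by simp [mul_comm]
      _ ≤ _ := Finset.sum_le_sum fun v _ => hdeg v
  omega

/-- transfer a walk staying in `s` into the induced graph -/
lemma walk_to_induce {G : SimpleGraph V} {s : Set V} :
    ∀ {x y : V} (p : G.Walk x y) (_hp : ∀ z ∈ p.support, z ∈ s) (hx : x ∈ s) (hy : y ∈ s),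
    ∃ q : (G.induce s).Walk ⟨x, hx⟩ ⟨y, hy⟩, q.length = p.length := by
  intro x y p
  induction p with
  | nil => intro _ hx hy; exact ⟨SimpleGraph.Walk.nil, rfl⟩
  | @cons u b w hadj q ih =>
    intro hp hx hy
    have hb : b ∈ s := hp b (by simp)
    obtain ⟨q', hq'⟩ := ih (fun z hz => hp z (by simp [hz])) hb hy
    exact ⟨SimpleGraph.Walk.cons (by exact hadj : (G.induce s).Adj ⟨u, hx⟩ ⟨b, hb⟩) q',
      by exact congrArg (· + 1) hq'⟩

/-- a path between two non-leaf vertices avoids the leaf -/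
lemma leaf_not_mem_support [DecidableEq V] {v x y : V}
    (hv : ∀ a b, T.Adj a v → T.Adj b v → a = b)
    (hx : x ≠ v) (hy : y ≠ v) {p : T.Walk x y} (hp : p.IsPath) : v ∉ p.support := by
  intro hmem
  set q := p.takeUntil v hmem with hqdef
  set r := p.dropUntil v hmem with hrdef
  obtain ⟨a, haa, q', hq'⟩ := q.reverse.exists_eq_cons_of_ne (Ne.symm hx)
  obtain ⟨b, hbb, r', hr'⟩ := r.exists_eq_cons_of_ne (Ne.symm hy)
  have ha_mem : a ∈ q.support := by
    have h1 : a ∈ q.reverse.support := by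
      rw [hq']
      simp only [SimpleGraph.Walk.support_cons, List.mem_cons]
      exact Or.inr q'.start_mem_support
    rwa [SimpleGraph.Walk.support_reverse, List.mem_reverse] at h1
  have hb_mem : b ∈ r.support.tail := by
    rw [hr']
    simp only [SimpleGraph.Walk.support_cons, List.tail_cons]
    exact r'.start_mem_support
  have hnodup : (q.support ++ r.support.tail).Nodup := by
    have h1 := hp.support_nodup
    rw [← p.take_spec hmem, SimpleGraph.Walk.support_append] at h1
    exact h1
  rw [List.nodup_append] at hnodup
  exact hnodup.2.2 a ha_mem b hb_mem (hv a b haa.symm hbb.symm)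

end Leaf

section Remove
variable {V : Type} [Fintype V] [DecidableEq V] {T : SimpleGraph V} {v : V}

lemma induced_walk_exists (hT : T.IsTree) (hv : ∀ a b, T.Adj a v → T.Adj b v → a = b)
    (x y : ({x | x ≠ v} : Set V)) :
    ∃ q : (T.induce {x | x ≠ v}).Walk x y, q.length = T.dist x.1 y.1 := by
  obtain ⟨p, hp, hl⟩ := hT.isConnected.exists_path_of_dist x.1 y.1
  have hnm : v ∉ p.support := leaf_not_mem_support hv x.2 y.2 hp
  have hsupp : ∀ z ∈ p.support, z ∈ ({x | x ≠ v} : Set V) := fun z hz => by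
    intro h; exact hnm (h ▸ hz)
  obtain ⟨q, hq⟩ := walk_to_induce p hsupp x.2 y.2
  exact ⟨q, hq.trans hl⟩

lemma induced_dist_eq (hT : T.IsTree) (hv : ∀ a b, T.Adj a v → T.Adj b v → a = b)
    (x y : ({x | x ≠ v} : Set V)) :
    (T.induce {x | x ≠ v}).dist x y = T.dist x.1 y.1 := by
  obtain ⟨q, hq⟩ := induced_walk_exists hT hv x y
  apply le_antisymm
  · exact hq ▸ SimpleGraph.dist_le q
  · obtain ⟨w, hw⟩ := SimpleGraph.Reachable.exists_walk_length_eq_dist ⟨q⟩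
    have h2 := SimpleGraph.dist_le (w.map (SimpleGraph.Embedding.induce {x | x ≠ v}).toHom)
    rwa [SimpleGraph.Walk.length_map, hw] at h2

lemma induced_isTree (hT : T.IsTree) (hv : ∀ a b, T.Adj a v → T.Adj b v → a = b)
    (h2 : 2 ≤ Fintype.card V) :
    (T.induce {x | x ≠ v}).IsTree := by
  rw [SimpleGraph.isTree_iff]
  constructor
  · have hne : Nonempty ({x | x ≠ v} : Set V) := by
      obtain ⟨w, hw⟩ := Fintype.exists_ne_of_one_lt_card h2 v
      exact ⟨⟨w, hw⟩⟩
    refine ⟨fun x y => ?_⟩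
    obtain ⟨q, -⟩ := induced_walk_exists hT hv x y
    exact ⟨q⟩
  · intro x c hc
    have hemb : T.induce {x | x ≠ v} ↪g T := SimpleGraph.Embedding.induce _
    have hinj : Function.Injective hemb.toHom := hemb.injective
    exact hT.IsAcyclic _ ((SimpleGraph.Walk.map_isCycle_iff_of_injective hinj).mpr hc)

lemma sum_split (g : V → ℕ) : ∑ x, g x = g v + ∑ x : ({x | x ≠ v} : Set V), g x.1 := by
  have h1 : ∑ x ∈ univ \ {v}, g x = ∑ x : ({x | x ≠ v} : Set V), g x.1 :=
    Finset.sum_subtype _ (by intro x; simp) g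
  rw [← h1, Finset.sum_eq_sum_sdiff_singleton_add (Finset.mem_univ v) g]
  ring

lemma s2_decomp (hT : T.IsTree) (hv : ∀ a b, T.Adj a v → T.Adj b v → a = b) :
    ∑ x, ∑ y, T.dist x y
      = (∑ x : ({x | x ≠ v} : Set V), ∑ y : ({x | x ≠ v} : Set V),
          (T.induce {x | x ≠ v}).dist x y) + 2 * ∑ y, T.dist v y := by
  rw [sum_split (v := v) (fun x => ∑ y, T.dist x y)]
  have hrow : ∀ x : ({x | x ≠ v} : Set V),
      ∑ y, T.dist x.1 y = T.dist x.1 v + ∑ y : ({x | x ≠ v} : Set V), T.dist x.1 y.1 :=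
    fun x => sum_split (v := v) (fun y => T.dist x.1 y)
  rw [Finset.sum_congr rfl (fun x _ => hrow x), Finset.sum_add_distrib]
  have hcol : ∑ x : ({x | x ≠ v} : Set V), T.dist x.1 v = ∑ y, T.dist v y := by
    have := sum_split (v := v) (fun y => T.dist v y)
    rw [SimpleGraph.dist_self] at this
    rw [show (∑ x : ({x | x ≠ v} : Set V), T.dist x.1 v)
        = ∑ x : ({x | x ≠ v} : Set V), T.dist v x.1 from
      Finset.sum_congr rfl (fun x _ => SimpleGraph.dist_comm ..)]
    omega
  rw [hcol]
  rw [show (∑ x : ({x | x ≠ v} : Set V), ∑ y : ({x | x ≠ v} : Set V), T.dist x.1 y.1)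
      = ∑ x : ({x | x ≠ v} : Set V), ∑ y : ({x | x ≠ v} : Set V),
          (T.induce {x | x ≠ v}).dist x y from
    Finset.sum_congr rfl (fun x _ => Finset.sum_congr rfl
      (fun y _ => (induced_dist_eq hT hv x y).symm))]
  ring

lemma card_compl_singleton : Fintype.card ({x | x ≠ v} : Set V) = Fintype.card V - 1 := by
  classical
  have : Fintype.card ({x | x ≠ v} : Set V) = Fintype.card {x // ¬ (x = v)} := by
    apply Fintype.card_congr
    exact Equiv.subtypeEquivRight (by intro x; simp [Set.mem_setOf_eq])
  rw [this, Fintype.card_subtype_compl, Fintype.card_subtype_eq]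

end Remove

lemma iso_dist_le {V W : Type} {G : SimpleGraph V} {H : SimpleGraph W} (e : G ≃g H) (u v : V) :
    H.dist (e u) (e v) ≤ G.dist u v := by
  by_cases hr : G.Reachable u v
  · obtain ⟨p, hp⟩ := hr.exists_walk_length_eq_dist
    have := SimpleGraph.dist_le (p.map e.toHom)
    rwa [SimpleGraph.Walk.length_map, hp] at this
  · rw [SimpleGraph.dist_eq_zero_of_not_reachable hr,
      SimpleGraph.dist_eq_zero_of_not_reachable]
    intro hre
    apply hr
    have := hre.map e.symm.toHom
    simpa using this

lemma iso_dist {V W : Type} {G : SimpleGraph V} {H : SimpleGraph W} (e : G ≃g H) (u v : V) :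
    H.dist (e u) (e v) = G.dist u v := by
  have h1 := iso_dist_le e u v
  have h2 := iso_dist_le e.symm (e u) (e v)
  simp only [RelIso.symm_apply_apply] at h2
  omega

/-- The main induction: parity and upper bound for the sum of distances in a tree. -/
lemma main : ∀ (n : ℕ) (V : Type) [Fintype V] [DecidableEq V] (T : SimpleGraph V),
    T.IsTree → Fintype.card V = n →
    Even (∑ x, ∑ y, T.dist x y) ∧
      (∑ x, ∑ y, T.dist x y) ≤ ∑ i : Fin n, ∑ j : Fin n, (pathGraph n).dist i j := by
  intro n
  induction n with
  | zero =>
    intro V _ _ T hT hc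
    have := hT.isConnected.nonempty
    rw [← Fintype.card_pos_iff] at this
    omega
  | succ n ih =>
    intro V _ _ T hT hc
    rcases Nat.eq_zero_or_pos n with rfl | hn
    · have hone : ∀ x y : V, x = y := fun x y =>
        Fintype.card_le_one_iff.mp (by omega) x y
      have hzero : ∑ x, ∑ y, T.dist x y = 0 := by
        apply Finset.sum_eq_zero; intro x _
        apply Finset.sum_eq_zero; intro y _
        rw [hone x y, SimpleGraph.dist_self]
      rw [hzero]
      exact ⟨Even.zero, Nat.zero_le _⟩
    · obtain ⟨v, hv⟩ := exists_leaf hT (by omega)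
      have hcard' : Fintype.card ({x | x ≠ v} : Set V) = n := by
        rw [card_compl_singleton, hc]
        omega
      obtain ⟨hev', hle'⟩ := ih ({x | x ≠ v} : Set V) (T.induce {x | x ≠ v})
        (induced_isTree hT hv (by omega)) hcard'
      have hdecomp := s2_decomp hT hv
      have hds := (dist_facts hT.isConnected v hc).1
      rw [p2_succ n]
      constructor
      · rw [hdecomp]
        exact hev'.add (even_two_mul _)
      · rw [hdecomp]
        omega

end WienerPathAux

open WienerPathAux

theorem stmt4 (n : ℕ) (T : SimpleGraph (Fin n)) (hT : T.IsTree) :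
    wiener T ≤ wiener (SimpleGraph.pathGraph n) ∧
      (wiener T = wiener (SimpleGraph.pathGraph n) ↔
        Nonempty (T ≃g SimpleGraph.pathGraph n)) := by
  classical
  have hc : Fintype.card (Fin n) = n := Fintype.card_fin n
  obtain ⟨hevenT, hle⟩ := main n (Fin n) T hT hc
  have hevenP := even_p2 n
  refine ⟨Nat.div_le_div_right hle, ?_, ?_⟩
  · intro heq
    unfold wiener at heq
    obtain ⟨a, ha⟩ := hevenT
    obtain ⟨b, hb⟩ := hevenP
    have hs2 : ∑ x, ∑ y, T.dist x y = ∑ i : Fin n, ∑ j : Fin n, (pathGraph n).dist i j := by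
      omega
    -- find a vertex with maximal distance sum
    have hpos : 0 < n := by
      have := hT.isConnected.nonempty
      rw [← Fintype.card_pos_iff] at this
      omega
    rcases Nat.lt_or_ge n 2 with hn1 | hn2
    · -- n = 1
      obtain rfl : n = 1 := by omega
      set v : Fin 1 := 0 with hvdef
      have hsum0 : ∑ y, T.dist v y = ∑ k ∈ range 1, k := by
        have hz : ∀ y : Fin 1, T.dist v y = 0 := fun y => by
          rw [Subsingleton.elim y v, SimpleGraph.dist_self]
        simp [hz]
      exact iso_of_unique_dist hT.isConnected v hc
        ((dist_facts hT.isConnected v hc).2 hsum0)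
    · -- n ≥ 2
      obtain ⟨m, rfl⟩ : ∃ m, n = m + 1 := ⟨n - 1, by omega⟩
      obtain ⟨v, hv⟩ := exists_leaf hT (by omega)
      have hcard' : Fintype.card ({x | x ≠ v} : Set (Fin (m+1))) = m := by
        rw [card_compl_singleton, hc]
        omega
      obtain ⟨-, hle'⟩ := main m ({x | x ≠ v} : Set (Fin (m+1)))
        (T.induce {x | x ≠ v}) (induced_isTree hT hv (by omega)) hcard'
      have hdecomp := s2_decomp hT hv
      have hds := (dist_facts hT.isConnected v hc).1
      have hp2 := p2_succ m
      have hsum0 : ∑ y, T.dist v y = ∑ k ∈ range (m+1), k := by omega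
      exact iso_of_unique_dist hT.isConnected v hc
        ((dist_facts hT.isConnected v hc).2 hsum0)
  · rintro ⟨e⟩
    unfold wiener
    congr 1
    calc ∑ u : Fin n, ∑ v : Fin n, T.dist u v
        = ∑ u : Fin n, ∑ v : Fin n, (pathGraph n).dist (e u) (e v) := by
          exact Finset.sum_congr rfl fun u _ => Finset.sum_congr rfl fun v _ =>
            (iso_dist e u v).symm
      _ = ∑ u : Fin n, ∑ v : Fin n, (pathGraph n).dist u v := by
          rw [← Equiv.sum_comp e.toEquiv (fun u => ∑ v : Fin n, (pathGraph n).dist u v)]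
          exact Finset.sum_congr rfl fun u _ =>
            Equiv.sum_comp e.toEquiv (fun v => (pathGraph n).dist (e u) v)
end

section
/- For every connected graph G on n \ge 2s vertices (s a positive integer), the conditional diameter satisfies D(G; s) \le n - 2s + 1. -/
open SimpleGraph Finset

/-!
Take `a ∈ A`, `b ∈ B` at distance `d = d(A, B) > 0` and a shortest `a`–`b` path. Any vertex of
`A ∪ B` on it other than `a`, `b` would give a pair closer than `d`, so its `d - 1` interior
vertices lie outside the disjoint union `A ∪ B`, whence `2s + d - 1 ≤ n`.
-/

section
variable {V : Type*} {G : SimpleGraph V} {A B : Finset V}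

lemma setDist_le_dist {x y : V} (hx : x ∈ A) (hy : y ∈ B) : setDist G A B ≤ G.dist x y :=
  Nat.sInf_le ⟨x, hx, y, hy, rfl⟩

lemma exists_dist_eq_setDist (h : 0 < setDist G A B) :
    ∃ a ∈ A, ∃ b ∈ B, G.dist a b = setDist G A B :=
  Nat.sInf_mem (Nat.nonempty_of_pos_sInf h)

lemma disjoint_of_setDist_pos (h : 0 < setDist G A B) : Disjoint A B :=
  disjoint_left.2 fun _ hA hB => by
    have := setDist_le_dist (G := G) hA hB
    rw [dist_self] at this
    omega

lemma SimpleGraph.Walk.support_toFinset_inter_subset_of_length_le_setDist [DecidableEq V] {a b : V}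
    (p : G.Walk a b) (ha : a ∈ A) (hb : b ∈ B) (hp : p.length ≤ setDist G A B) :
    p.support.toFinset ∩ (A ∪ B) ⊆ {a, b} := by
  intro v hv
  obtain ⟨hvp, hvAB⟩ := mem_inter.1 hv
  rw [List.mem_toFinset] at hvp
  have hsplit := congr_arg Walk.length (p.take_spec hvp)
  rw [Walk.length_append] at hsplit
  rcases mem_union.1 hvAB with hvA | hvB
  · have : setDist G A B ≤ (p.dropUntil v hvp).length :=
      (setDist_le_dist hvA hb).trans (dist_le _)
    have hv : a = v := Walk.eq_of_length_eq_zero (p := p.takeUntil v hvp) (by omega)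
    simp [hv]
  · have : setDist G A B ≤ (p.takeUntil v hvp).length :=
      (setDist_le_dist ha hvB).trans (dist_le _)
    have hv : v = b := Walk.eq_of_length_eq_zero (p := p.dropUntil v hvp) (by omega)
    simp [hv]

theorem setDist_add_card_add_card_le [Fintype V] (h : 0 < setDist G A B) :
    setDist G A B + #A + #B ≤ Fintype.card V + 1 := by
  classical
  obtain ⟨a, ha, b, hb, hab⟩ := exists_dist_eq_setDist h
  obtain ⟨p, hpath, hlen⟩ :=
    (Reachable.of_dist_ne_zero (by omega : G.dist a b ≠ 0)).exists_path_of_dist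
  set S := p.support.toFinset
  have hS : #S = setDist G A B + 1 := by
    rw [List.toFinset_card_of_nodup hpath.support_nodup, Walk.length_support, hlen, hab]
  have hAB : #(A ∪ B) = #A + #B := card_union_of_disjoint (disjoint_of_setDist_pos h)
  have hinter : #(S ∩ (A ∪ B)) ≤ 2 :=
    (card_le_card (p.support_toFinset_inter_subset_of_length_le_setDist ha hb
      (hlen.trans hab).le)).trans card_le_two
  have hunion : #(S ∪ (A ∪ B)) ≤ Fintype.card V := card_le_univ _
  have := card_union_add_card_inter S (A ∪ B)
  omega

end

theorem stmt7_general {V : Type*} [Fintype V] (G : SimpleGraph V)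
    (n s : ℕ) (hcard : Fintype.card V = n) :
    condDiam G s ≤ n - 2 * s + 1 := by
  refine csSup_le' ?_
  rintro _ ⟨A, B, hA, hB, rfl⟩
  rcases (setDist G A B).eq_zero_or_pos with h | h
  · omega
  · have := setDist_add_card_add_card_le h
    omega

theorem stmt7 {V : Type*} [Fintype V] (G : SimpleGraph V) (hG : G.Connected)
    (n s : ℕ) (hcard : Fintype.card V = n) (hs : 1 ≤ s) (hn : 2 * s ≤ n) :
    condDiam G s ≤ n - 2 * s + 1 :=
  stmt7_general G n s hcard
end

section
/- Let G be a connected graph on n vertices with n \ge 2s and conditional diameter D(G; s) = n - 2s + 1, where s is a positive integer. Then W(G) \le W(P_n), and equality holds if and only if G \cong P_n. -/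
open SimpleGraph Finset

namespace StmtAux



variable {V : Type*} {W : Type*} {G : SimpleGraph V} {H : SimpleGraph W} {u v w : V}

lemma dist_start_getVert_le (hG : G.Connected) (p : G.Walk u v) (i : ℕ) :
    G.dist u (p.getVert i) ≤ i := by
  induction p generalizing i with
  | nil => simp [Walk.getVert_of_length_le Walk.nil (by simp : Walk.nil.length ≤ i), SimpleGraph.dist_self]
  | @cons a b c h q ih =>
    cases i with
    | zero => simp
    | succ i =>
      rw [Walk.getVert_cons_succ]
      calc G.dist a (q.getVert i) ≤ G.dist a b + G.dist b (q.getVert i) :=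
            hG.dist_triangle
        _ ≤ 1 + i := by
            have h1 : G.dist a b ≤ 1 := by
              simpa using SimpleGraph.dist_le (Walk.cons h Walk.nil)
            exact Nat.add_le_add h1 (ih i)
        _ = i + 1 := Nat.add_comm _ _

lemma dist_getVert_end_le (p : G.Walk u v) (i : ℕ) :
    G.dist (p.getVert i) v ≤ p.length - i := by
  induction p generalizing i with
  | nil => simp [Walk.getVert_of_length_le Walk.nil (by simp : Walk.nil.length ≤ i)]
  | @cons a b c h q ih =>
    cases i with
    | zero => simpa using SimpleGraph.dist_le (Walk.cons h q)
    | succ i =>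
      rw [Walk.getVert_cons_succ]
      simpa [Walk.length_cons, Nat.succ_sub_succ] using ih i

lemma dist_getVert_eq (hG : G.Connected) (p : G.Walk u v) (hp : p.length = G.dist u v)
    {i : ℕ} (hi : i ≤ p.length) : G.dist u (p.getVert i) = i := by
  have h1 := dist_start_getVert_le hG p i
  have h2 := dist_getVert_end_le p i
  have h3 : G.dist u v ≤ G.dist u (p.getVert i) + G.dist (p.getVert i) v :=
    hG.dist_triangle
  omega

lemma exists_dist_eq (hG : G.Connected) (u x : V) {k : ℕ} (hk : k ≤ G.dist u x) :
    ∃ y, G.dist u y = k := by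
  obtain ⟨p, hp⟩ := (hG u x).exists_walk_length_eq_dist
  exact ⟨p.getVert k, dist_getVert_eq hG p hp (by omega)⟩

lemma dist_lt_card [Fintype V] [DecidableEq V] (hG : G.Connected) (u x : V) :
    G.dist u x < Fintype.card V := by
  obtain ⟨p, hp⟩ := (hG u x).exists_walk_length_eq_dist
  calc G.dist u x ≤ p.bypass.length := SimpleGraph.dist_le _
    _ < Fintype.card V := p.bypass_isPath.length_lt


lemma reachable_induce_of_walk {s : Set V} :
    ∀ {a b : V} (p : G.Walk a b) (hp : ∀ x ∈ p.support, x ∈ s),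
      (G.induce s).Reachable ⟨a, hp a p.start_mem_support⟩ ⟨b, hp b p.end_mem_support⟩ := by
  intro a b p
  induction p with
  | nil => intro hp; exact Reachable.refl _
  | @cons a b c h q ih =>
    intro hp
    have hb : b ∈ s := hp b (by simp [Walk.support_cons])
    have hadj : (G.induce s).Adj ⟨a, hp a (Walk.cons h q).start_mem_support⟩ ⟨b, hb⟩ := by
      simpa using h
    exact (hadj.reachable).trans (ih fun x hx => hp x (by simp [Walk.support_cons, hx]))

lemma exists_noncut [Fintype V] [DecidableEq V] (hG : G.Connected)
    (h1 : 1 < Fintype.card V) :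
    ∃ v : V, (G.induce {v}ᶜ).Connected := by
  obtain ⟨u⟩ : Nonempty V := hG.nonempty
  obtain ⟨v, -, hv⟩ := Finset.exists_max_image Finset.univ (G.dist u) ⟨u, Finset.mem_univ u⟩
  refine ⟨v, ?_⟩
  have hvu : v ≠ u := by
    obtain ⟨w, hw⟩ := Fintype.exists_ne_of_one_lt_card h1 u
    have hpos : 0 < G.dist u w := hG.pos_dist_of_ne (Ne.symm hw)
    have := hv w (Finset.mem_univ w)
    intro h; subst h
    rw [SimpleGraph.dist_self] at this; omega
  have hu : u ∈ ({v}ᶜ : Set V) := by simp only [Set.mem_compl_iff, Set.mem_singleton_iff]; exact fun h => hvu h.symm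
  have key : ∀ x : ({v}ᶜ : Set V), (G.induce {v}ᶜ).Reachable x ⟨u, hu⟩ := by
    rintro ⟨x, hx⟩
    have hxv : x ≠ v := by simpa using hx
    obtain ⟨p, hp⟩ := (hG u x).exists_walk_length_eq_dist
    have hvs : v ∉ p.support := by
      intro hmem
      obtain ⟨i, hgi, hile⟩ := Walk.mem_support_iff_exists_getVert.mp hmem
      have hdi : G.dist u (p.getVert i) = i := dist_getVert_eq hG p hp hile
      rw [hgi] at hdi
      have hmax : G.dist u x ≤ G.dist u v := hv x (Finset.mem_univ x)
      have hieq : i = p.length := by omega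
      rw [hieq, p.getVert_length] at hgi
      exact hxv hgi
    have hall : ∀ y ∈ p.reverse.support, y ∈ ({v}ᶜ : Set V) := by
      intro y hy
      rw [Walk.support_reverse, List.mem_reverse] at hy
      simp only [Set.mem_compl_iff, Set.mem_singleton_iff]
      intro h; subst h; exact hvs hy
    exact reachable_induce_of_walk p.reverse hall
  have : Nonempty ({v}ᶜ : Set V) := ⟨⟨u, hu⟩⟩
  exact ⟨fun x y => (key x).trans (key y).symm⟩

lemma dist_le_dist_induce {s : Set V} (hs : (G.induce s).Connected) (x y : s) :
    G.dist (x : V) (y : V) ≤ (G.induce s).dist x y := by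
  obtain ⟨p, hp⟩ := (hs x y).exists_walk_length_eq_dist
  have := SimpleGraph.dist_le (p.map (SimpleGraph.Embedding.induce s).toHom)
  exact this.trans ((Walk.length_map _ _).le.trans hp.le)

lemma iso_dist_le (e : G ≃g H) (u v : V) :
    H.dist (e u) (e v) ≤ G.dist u v := by
  by_cases h : G.Reachable u v
  · obtain ⟨p, hp⟩ := h.exists_walk_length_eq_dist
    simpa [hp] using SimpleGraph.dist_le (p.map e.toHom)
  · rw [SimpleGraph.dist_eq_zero_of_not_reachable h,
      SimpleGraph.dist_eq_zero_of_not_reachable]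
    rintro ⟨q⟩
    exact h ⟨(q.map e.symm.toHom).copy (by simp) (by simp)⟩

lemma iso_dist (e : G ≃g H) (u v : V) : H.dist (e u) (e v) = G.dist u v :=
  le_antisymm (iso_dist_le e u v) (by simpa using iso_dist_le e.symm (e u) (e v))

lemma SS_iso [Fintype V] [Fintype W] (e : G ≃g H) :
    ∑ u : V, ∑ v : V, G.dist u v = ∑ u : W, ∑ v : W, H.dist u v := by
  rw [← Equiv.sum_comp e.toEquiv (fun u => ∑ v : W, H.dist u v)]
  refine Finset.sum_congr rfl fun u _ => ?_
  rw [← Equiv.sum_comp e.toEquiv (fun v => H.dist (e.toEquiv u) v)]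
  exact Finset.sum_congr rfl fun v _ => (iso_dist e u v).symm



variable {V : Type*}

lemma sum_le_gauss [Fintype V] [DecidableEq V] (f : V → ℕ) (N : ℕ)
    (hN : Fintype.card V = N) (hlt : ∀ x, f x < N)
    (hgap : ∀ (k : ℕ) (x : V), k ≤ f x → ∃ y, f y = k) :
    (∑ x, f x ≤ ∑ i ∈ range N, i) ∧
      (∑ x, f x = ∑ i ∈ range N, i → Function.Injective f) := by
  classical
  set c : ℕ → ℕ := fun k => (univ.filter fun x : V => k < f x).card with hc
  have hsum : ∑ x, f x = ∑ k ∈ range N, c k := by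
    have hx : ∀ x : V, f x = ∑ k ∈ range N, if k < f x then 1 else 0 := by
      intro x
      have : ∑ k ∈ range N, (if k < f x then 1 else 0)
          = ((range N).filter fun k => k < f x).card := by
        simpa using Finset.sum_boole (fun k => k < f x) (range N)
      rw [this]
      have : ((range N).filter fun k => k < f x) = range (f x) := by
        ext k; simp only [mem_filter, mem_range]
        constructor
        · rintro ⟨-, h⟩; exact h
        · intro h; exact ⟨lt_trans h (hlt x), h⟩
      rw [this, card_range]
    calc ∑ x, f x = ∑ x : V, ∑ k ∈ range N, if k < f x then 1 else 0 :=
          Finset.sum_congr rfl fun x _ => hx x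
      _ = ∑ k ∈ range N, ∑ x : V, if k < f x then 1 else 0 := Finset.sum_comm
      _ = ∑ k ∈ range N, c k := by
          refine Finset.sum_congr rfl fun k _ => ?_
          exact Finset.sum_boole (R := ℕ) (fun x : V => k < f x) univ
  have hsplit : ∀ k : ℕ, c k + (univ.filter fun x : V => ¬ k < f x).card = N := by
    intro k
    rw [hc]
    rw [Finset.card_filter_add_card_filter_not]
    rw [Finset.card_univ, hN]
  have hbound : ∀ k ∈ range N, c k ≤ N - 1 - k := by
    intro k hk
    by_cases hex : ∃ x : V, k < f x
    · obtain ⟨x0, hx0⟩ := hex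
      have hsub : range (k + 1) ⊆ (univ.filter fun x : V => ¬ k < f x).image f := by
        intro j hj
        rw [mem_range] at hj
        obtain ⟨y, hy⟩ := hgap j x0 (by omega)
        exact mem_image.mpr ⟨y, by simp [hy]; omega, hy⟩
      have h1 : k + 1 ≤ (univ.filter fun x : V => ¬ k < f x).card := by
        calc k + 1 = (range (k + 1)).card := (card_range _).symm
          _ ≤ ((univ.filter fun x : V => ¬ k < f x).image f).card := card_le_card hsub
          _ ≤ _ := card_image_le
      have := hsplit k
      omega
    · have : c k = 0 := by
        rw [hc]; simp only [Finset.card_eq_zero, Finset.filter_eq_empty_iff]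
        push_neg at hex
        intro x _; exact not_lt.mpr (hex x)
      omega
  have href : ∑ k ∈ range N, (N - 1 - k) = ∑ k ∈ range N, k := by
    simpa using Finset.sum_range_reflect (fun j => j) N
  have hle : ∑ x, f x ≤ ∑ i ∈ range N, i := by
    rw [hsum, ← href]
    exact Finset.sum_le_sum hbound
  refine ⟨hle, ?_⟩
  intro heq a b hab
  by_contra hne
  have hck : ∀ k ∈ range N, c k = N - 1 - k := by
    have : ∑ k ∈ range N, c k = ∑ k ∈ range N, (N - 1 - k) := by
      rw [← hsum, heq, href]
    exact fun k hk => (Finset.sum_eq_sum_iff_of_le hbound).mp this k hk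
  set k := f a with hk
  have hkN : k < N := hlt a
  have hS : (univ.filter fun x : V => ¬ k < f x).card = k + 1 := by
    have h1 := hsplit k
    have h2 := hck k (mem_range.mpr hkN)
    omega
  have hfb : f b = k := hab.symm
  have hbmem : b ∈ univ.filter fun x : V => ¬ k < f x := by
    simp [hfb]
  have hsub2 : range (k + 1) ⊆ ((univ.filter fun x : V => ¬ k < f x).erase b).image f := by
    intro j hj
    rw [mem_range] at hj
    obtain ⟨y, hy⟩ := hgap j a (by omega)
    by_cases hyb : y = b
    · subst hyb
      have hjk : j = k := by rw [← hy, hfb]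
      refine mem_image.mpr ⟨a, ?_, by omega⟩
      simp only [mem_erase, mem_filter, mem_univ, true_and]
      exact ⟨hne, by omega⟩
    · refine mem_image.mpr ⟨y, ?_, hy⟩
      simp only [mem_erase, mem_filter, mem_univ, true_and]
      exact ⟨hyb, by omega⟩
  have hcon : k + 1 ≤ k := by
    calc k + 1 = (range (k + 1)).card := (card_range _).symm
      _ ≤ _ := card_le_card hsub2
      _ ≤ ((univ.filter fun x : V => ¬ k < f x).erase b).card := card_image_le
      _ = k + 1 - 1 := by rw [card_erase_of_mem hbmem, hS]
      _ = k := rfl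
  omega



lemma pathGraph_conn_of_pos {n : ℕ} (hn : 0 < n) : (pathGraph n).Connected := by
  obtain ⟨m, rfl⟩ := Nat.exists_eq_succ_of_ne_zero (Nat.pos_iff_ne_zero.mp hn)
  exact pathGraph_connected m

lemma pathGraph_dist_le {n : ℕ} : ∀ (k : ℕ) (i j : Fin n), i.val + k = j.val →
    (pathGraph n).dist i j ≤ k := by
  intro k
  induction k with
  | zero =>
    intro i j h
    have : i = j := Fin.ext (by omega)
    simp [this]
  | succ k ih =>
    intro i j h
    have hc : (pathGraph n).Connected := pathGraph_conn_of_pos i.pos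
    have hi1 : i.val + 1 < n := by omega
    set i' : Fin n := ⟨i.val + 1, hi1⟩ with hi'
    have hadj : (pathGraph n).Adj i i' := pathGraph_adj.mpr (Or.inl rfl)
    calc (pathGraph n).dist i j
        ≤ (pathGraph n).dist i i' + (pathGraph n).dist i' j := hc.dist_triangle
      _ ≤ 1 + k := by
          refine Nat.add_le_add ?_ (ih i' j (by simp [hi']; omega))
          simpa using SimpleGraph.dist_le (Walk.cons hadj Walk.nil)
      _ = k + 1 := Nat.add_comm _ _

lemma pathGraph_walk_le {n : ℕ} {i j : Fin n} (p : (pathGraph n).Walk i j) :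
    Nat.dist i.val j.val ≤ p.length := by
  induction p with
  | nil => simp [Nat.dist_self]
  | @cons a b c h q ih =>
    have h1 : Nat.dist a.val b.val = 1 := by
      rcases pathGraph_adj.mp h with h' | h' <;> simp [Nat.dist] <;> omega
    have htri := Nat.dist.triangle_inequality a.val b.val c.val
    rw [Walk.length_cons]
    omega

lemma pathGraph_dist {n : ℕ} (i j : Fin n) :
    (pathGraph n).dist i j = Nat.dist i.val j.val := by
  have hc : (pathGraph n).Connected := pathGraph_conn_of_pos i.pos
  apply le_antisymm
  · rcases le_total i.val j.val with h | h
    · have := pathGraph_dist_le (j.val - i.val) i j (by omega)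
      rwa [Nat.dist_eq_sub_of_le h]
    · have := pathGraph_dist_le (i.val - j.val) j i (by omega)
      rw [Nat.dist_comm]
      rw [SimpleGraph.dist_comm]
      rwa [Nat.dist_eq_sub_of_le h]
  · obtain ⟨p, hp⟩ := (hc i j).exists_walk_length_eq_dist
    rw [← hp]
    exact pathGraph_walk_le p

def gaussSum (n : ℕ) : ℕ := ∑ i ∈ range n, i

def pathSS (n : ℕ) : ℕ := ∑ i ∈ range n, ∑ j ∈ range n, Nat.dist i j

lemma sum_sub_eq_gauss (n : ℕ) : ∑ i ∈ range n, (n - i) = gaussSum (n + 1) := by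
  unfold gaussSum
  have h1 : ∑ i ∈ range (n + 1), (n - i) = ∑ i ∈ range (n + 1), i := by
    simpa using Finset.sum_range_reflect (fun j => j) (n + 1)
  rw [← h1, Finset.sum_range_succ]
  simp

lemma pathSS_succ (n : ℕ) : pathSS (n + 1) = pathSS n + 2 * gaussSum (n + 1) := by
  unfold pathSS
  rw [Finset.sum_range_succ]
  simp_rw [Finset.sum_range_succ]
  rw [Finset.sum_add_distrib]
  have h1 : ∑ i ∈ range n, Nat.dist i n = gaussSum (n + 1) := by
    rw [← sum_sub_eq_gauss n]
    refine Finset.sum_congr rfl fun i hi => ?_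
    rw [mem_range] at hi
    exact Nat.dist_eq_sub_of_le (le_of_lt hi)
  have h2 : ∑ j ∈ range n, Nat.dist n j = gaussSum (n + 1) := by
    rw [← h1]
    exact Finset.sum_congr rfl fun j _ => Nat.dist_comm n j
  rw [h1, h2, Nat.dist_self]
  ring

lemma pathSS_even (n : ℕ) : Even (pathSS n) := by
  induction n with
  | zero => simp [pathSS]
  | succ n ih => rw [pathSS_succ]; exact ih.add (even_two_mul _)



lemma SS_split {V : Type*} [Fintype V] [DecidableEq V] (G : SimpleGraph V) (v : V) :
    ∑ u : V, ∑ w : V, G.dist u w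
      = (∑ u ∈ univ.erase v, ∑ w ∈ univ.erase v, G.dist u w)
        + 2 * ∑ w : V, G.dist v w := by
  rw [← Finset.sum_erase_add univ _ (mem_univ v)]
  have h1 : ∀ u ∈ univ.erase v, ∑ w : V, G.dist u w
      = ∑ w ∈ univ.erase v, G.dist u w + G.dist u v :=
    fun u _ => (Finset.sum_erase_add univ _ (mem_univ v)).symm
  rw [Finset.sum_congr rfl h1, Finset.sum_add_distrib]
  have h2 : ∑ u ∈ univ.erase v, G.dist u v = ∑ u ∈ univ.erase v, G.dist v u :=
    Finset.sum_congr rfl fun u _ => SimpleGraph.dist_comm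
  have h3 : ∑ u ∈ univ.erase v, G.dist v u = ∑ w : V, G.dist v w := by
    rw [← Finset.sum_erase_add univ _ (mem_univ v), SimpleGraph.dist_self, Nat.add_zero]
  rw [h2, h3]
  ring

lemma sum_erase_eq_subtype {V : Type*} [Fintype V] [DecidableEq V] (v : V) (f : V → ℕ) :
    ∑ u ∈ univ.erase v, f u = ∑ u : ({v}ᶜ : Set V), f u := by
  rw [← Finset.sum_subtype (univ.erase v) (fun x => ?_) f]
  simp [Set.mem_compl_iff]

lemma SS_le : ∀ (m : ℕ) {V : Type*} [Fintype V] [DecidableEq V] (G : SimpleGraph V),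
    Fintype.card V = m → G.Connected →
    ∑ u : V, ∑ w : V, G.dist u w ≤ pathSS m := by
  intro m
  induction m with
  | zero =>
    intro V _ _ G hcard hG
    have : IsEmpty V := Fintype.card_eq_zero_iff.mp hcard
    simp [pathSS]
  | succ m ih =>
    intro V _ _ G hcard hG
    rcases Nat.eq_zero_or_pos m with hm | hm
    · subst hm
      have hone : ∀ u w : V, u = w := fun u w => Fintype.card_le_one_iff.mp (by omega) u w
      have h0 : ∀ u w : V, G.dist u w = 0 := fun u w => by
        rw [hone u w]; exact SimpleGraph.dist_self
      simp [h0]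
    · obtain ⟨v, hv⟩ := exists_noncut hG (by omega)
      have hcs : Fintype.card ({v}ᶜ : Set V) = m := by
        rw [Fintype.card_compl_set, Set.card_singleton, hcard]; omega
      have hA : ∑ u ∈ univ.erase v, ∑ w ∈ univ.erase v, G.dist u w ≤ pathSS m := by
        have e1 : ∑ u ∈ univ.erase v, ∑ w ∈ univ.erase v, G.dist u w
            = ∑ u : ({v}ᶜ : Set V), ∑ w : ({v}ᶜ : Set V), G.dist u.val w.val := by
          rw [sum_erase_eq_subtype v (fun u => ∑ w ∈ univ.erase v, G.dist u w)]
          exact Finset.sum_congr rfl fun u _ =>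
            sum_erase_eq_subtype v (fun w => G.dist u.val w)
        rw [e1]
        calc ∑ u : ({v}ᶜ : Set V), ∑ w : ({v}ᶜ : Set V), G.dist u.val w.val
            ≤ ∑ u : ({v}ᶜ : Set V), ∑ w : ({v}ᶜ : Set V), (G.induce {v}ᶜ).dist u w :=
              Finset.sum_le_sum fun u _ => Finset.sum_le_sum fun w _ =>
                dist_le_dist_induce hv u w
          _ ≤ pathSS m := ih (G.induce {v}ᶜ) hcs hv
      have hD : ∑ w : V, G.dist v w ≤ gaussSum (m + 1) := by
        have := (sum_le_gauss (G.dist v) (m + 1)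
          (by rw [hcard]) (fun x => by rw [← hcard]; exact dist_lt_card hG v x)
          (fun k x hk => exists_dist_eq hG v x hk)).1
        simpa [gaussSum] using this
      have hsplit := SS_split G v
      have hrec := pathSS_succ m
      omega

lemma iso_of_SS_eq {V : Type*} [Fintype V] [DecidableEq V] (G : SimpleGraph V) (m : ℕ)
    (hm : 0 < m) (hcard : Fintype.card V = m + 1) (hG : G.Connected)
    (heq : ∑ u : V, ∑ w : V, G.dist u w = pathSS (m + 1)) :
    Nonempty (G ≃g pathGraph (m + 1)) := by
  obtain ⟨v, hv⟩ := exists_noncut hG (by omega)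
  have hcs : Fintype.card ({v}ᶜ : Set V) = m := by
    rw [Fintype.card_compl_set, Set.card_singleton, hcard]; omega
  have hA : ∑ u ∈ univ.erase v, ∑ w ∈ univ.erase v, G.dist u w ≤ pathSS m := by
    have e1 : ∑ u ∈ univ.erase v, ∑ w ∈ univ.erase v, G.dist u w
        = ∑ u : ({v}ᶜ : Set V), ∑ w : ({v}ᶜ : Set V), G.dist u.val w.val := by
      rw [sum_erase_eq_subtype v (fun u => ∑ w ∈ univ.erase v, G.dist u w)]
      exact Finset.sum_congr rfl fun u _ =>
        sum_erase_eq_subtype v (fun w => G.dist u.val w)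
    rw [e1]
    calc ∑ u : ({v}ᶜ : Set V), ∑ w : ({v}ᶜ : Set V), G.dist u.val w.val
        ≤ ∑ u : ({v}ᶜ : Set V), ∑ w : ({v}ᶜ : Set V), (G.induce {v}ᶜ).dist u w :=
          Finset.sum_le_sum fun u _ => Finset.sum_le_sum fun w _ =>
            dist_le_dist_induce hv u w
      _ ≤ pathSS m := SS_le m (G.induce {v}ᶜ) hcs hv
  have hgauss := sum_le_gauss (G.dist v) (m + 1) hcard
    (fun x => by rw [← hcard]; exact dist_lt_card hG v x)
    (fun k x hk => exists_dist_eq hG v x hk)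
  have hsplit := SS_split G v
  have hrec := pathSS_succ m
  have hDeq : ∑ w : V, G.dist v w = ∑ i ∈ range (m + 1), i := by
    have h1 := hgauss.1
    unfold gaussSum at hrec
    omega
  have hinj : Function.Injective (G.dist v) := hgauss.2 hDeq
  have hlt' : ∀ x, G.dist v x < m + 1 := fun x => by
    rw [← hcard]; exact dist_lt_card hG v x
  set φ : V → Fin (m + 1) := fun x => ⟨G.dist v x, hlt' x⟩ with hφ
  have hφinj : Function.Injective φ := fun a b h =>
    hinj (by simpa [hφ] using congrArg Fin.val h)
  have hφbij : Function.Bijective φ :=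
    (Fintype.bijective_iff_injective_and_card φ).mpr ⟨hφinj, by simp [hcard]⟩
  have key : ∀ a b : V, G.dist v a + 1 = G.dist v b → G.Adj a b := by
    intro a b h
    obtain ⟨p, hp⟩ := (hG v b).exists_walk_length_eq_dist
    have hz : G.dist v (p.getVert (G.dist v a)) = G.dist v a :=
      dist_getVert_eq hG p hp (by omega)
    have hza : p.getVert (G.dist v a) = a := hinj hz
    have hadj := p.adj_getVert_succ (by omega : G.dist v a < p.length)
    rw [hza] at hadj
    have hb : p.getVert (G.dist v a + 1) = b := by
      have : G.dist v a + 1 = p.length := by omega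
      rw [this, p.getVert_length]
    rwa [hb] at hadj
  have hfwd : ∀ a b : V, G.Adj a b → (pathGraph (m + 1)).Adj (φ a) (φ b) := by
    intro a b hab
    have hd1 : G.dist a b = 1 := SimpleGraph.dist_eq_one_iff_adj.mpr hab
    have ht1 : G.dist v b ≤ G.dist v a + G.dist a b := hG.dist_triangle
    have ht2 : G.dist v a ≤ G.dist v b + G.dist b a := hG.dist_triangle
    have hd2 : G.dist b a = 1 := SimpleGraph.dist_eq_one_iff_adj.mpr hab.symm
    have hne : G.dist v a ≠ G.dist v b := fun h => hab.ne (hinj h)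
    rw [pathGraph_adj]
    simp only [hφ]
    omega
  have hbwd : ∀ a b : V, (pathGraph (m + 1)).Adj (φ a) (φ b) → G.Adj a b := by
    intro a b hab
    rw [pathGraph_adj] at hab
    simp only [hφ] at hab
    rcases hab with h | h
    · exact key a b h
    · exact (key b a h).symm
  exact ⟨⟨Equiv.ofBijective φ hφbij, by
    intro a b
    exact ⟨fun h => hbwd a b h, fun h => hfwd a b h⟩⟩⟩

lemma pathSS_eq_fin (n : ℕ) :
    ∑ u : Fin n, ∑ v : Fin n, (pathGraph n).dist u v = pathSS n := by
  unfold pathSS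
  rw [← Fin.sum_univ_eq_sum_range (fun i => ∑ j ∈ range n, Nat.dist i j) n]
  refine Finset.sum_congr rfl fun i _ => ?_
  rw [← Fin.sum_univ_eq_sum_range (fun j => Nat.dist i.val j) n]
  exact Finset.sum_congr rfl fun j _ => pathGraph_dist i j

end StmtAux

theorem stmt8 (n s : ℕ) (hs : 1 ≤ s) (hn : 2 * s ≤ n) (G : SimpleGraph (Fin n))
    (hG : G.Connected) (hd : condDiam G s = n - 2 * s + 1) :
    wiener G ≤ wiener (SimpleGraph.pathGraph n) ∧
      (wiener G = wiener (SimpleGraph.pathGraph n) ↔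
        Nonempty (G ≃g SimpleGraph.pathGraph n)) := by
  have hn2 : 2 ≤ n := by omega
  clear hs hn hd
  obtain ⟨m, rfl⟩ : ∃ m, n = m + 1 := ⟨n - 1, by omega⟩
  have hm : 0 < m := by omega
  have hcard : Fintype.card (Fin (m + 1)) = m + 1 := Fintype.card_fin _
  have hpath := StmtAux.pathSS_eq_fin (m + 1)
  have hle := StmtAux.SS_le (m + 1) G hcard hG
  obtain ⟨t, ht⟩ := StmtAux.pathSS_even (m + 1)
  constructor
  · unfold wiener
    rw [hpath]
    exact Nat.div_le_div_right hle
  · constructor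
    · intro hw
      have hSSeq : ∑ u : Fin (m + 1), ∑ w : Fin (m + 1), G.dist u w
          = StmtAux.pathSS (m + 1) := by
        unfold wiener at hw
        rw [hpath] at hw
        omega
      exact StmtAux.iso_of_SS_eq G m hm hcard hG hSSeq
    · rintro ⟨e⟩
      unfold wiener
      rw [StmtAux.SS_iso e, hpath]
end

section
/- For s+1 \le a \le b \le n-s-2, the tree T^{a,b}_n satisfies W(T^{a,b}_n) \le W(T^{a, n-s-2}_n), with equality if and only if b = n-s-2. -/
open SimpleGraph Finset

/-!
Moving the pendant vertex `w₂` from `x_b` to `x_B`, `B = n - s - 2`, changes no distance between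
the other vertices, so the two Wiener indices differ exactly by the distance sums of `w₂`.
With `m = n - 2` path vertices this sum is `∑_{k < m} |b - 1 - k| + |b - a| + m + 2`. The first
term is symmetric under `b - 1 ↦ m - 1 - (b - 1)` and convex, so on `s ≤ b - 1 ≤ m - 1 - s` it is
largest at the endpoint `B - 1`; the second term is strictly increasing in `b ≥ a`.
-/

namespace SimpleGraph

variable {V : Type*} {G : SimpleGraph V}

theorem Walk.le_length_of_adj_le_one {f : V → V → ℕ} (hself : ∀ u, f u u = 0)
    (htri : ∀ u v w, f u w ≤ f u v + f v w) (hadj : ∀ u v, G.Adj u v → f u v ≤ 1)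
    {u v : V} (p : G.Walk u v) : f u v ≤ p.length := by
  induction p with
  | nil => simp [hself]
  | cons h p ih =>
    calc _ ≤ f _ _ + f _ _ := htri _ _ _
      _ ≤ 1 + p.length := add_le_add (hadj _ _ h) ih
      _ = _ := by rw [length_cons, add_comm]

theorem dist_eq_of_walk_length_eq {f : V → V → ℕ} (hself : ∀ u, f u u = 0)
    (htri : ∀ u v w, f u w ≤ f u v + f v w) (hadj : ∀ u v, G.Adj u v → f u v ≤ 1)
    {u v : V} (p : G.Walk u v) (hp : p.length = f u v) : G.dist u v = f u v := by
  obtain ⟨q, hq⟩ := p.reachable.exists_walk_length_eq_dist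
  exact le_antisymm (hp ▸ dist_le p) (hq ▸ q.le_length_of_adj_le_one hself htri hadj)

theorem sum_sum_dist_eq [Fintype V] [DecidableEq V] (x : V) :
    ∑ u, ∑ v, G.dist u v
      = ∑ u ∈ univ.erase x, ∑ v ∈ univ.erase x, G.dist u v + 2 * distSum G x := by
  have hx : distSum G x = ∑ v ∈ univ.erase x, G.dist x v := by
    rw [distSum, ← add_sum_erase _ _ (mem_univ x), dist_self, zero_add]
  calc ∑ u, ∑ v, G.dist u v = ∑ u, (∑ v ∈ univ.erase x, G.dist u v + G.dist x u) :=
        sum_congr rfl fun u _ => by rw [← add_sum_erase _ _ (mem_univ x), dist_comm, add_comm]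
    _ = ∑ u ∈ univ.erase x, ∑ v ∈ univ.erase x, G.dist u v + 2 * distSum G x := by
        rw [sum_add_distrib, ← add_sum_erase _ _ (mem_univ x), ← distSum, hx]
        ring

theorem wiener_add_distSum_eq [Fintype V] {G' : SimpleGraph V} (x : V)
    (h : ∀ u v, u ≠ x → v ≠ x → G.dist u v = G'.dist u v) :
    wiener G + distSum G' x = wiener G' + distSum G x := by
  classical
  have hG := G.sum_sum_dist_eq x
  have hG' := G'.sum_sum_dist_eq x
  have hcore : ∑ u ∈ univ.erase x, ∑ v ∈ univ.erase x, G.dist u v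
      = ∑ u ∈ univ.erase x, ∑ v ∈ univ.erase x, G'.dist u v :=
    sum_congr rfl fun u hu => sum_congr rfl fun v hv =>
      h u v (ne_of_mem_erase hu) (ne_of_mem_erase hv)
  unfold wiener
  omega

end SimpleGraph

/-- Pairing `k` with `m - 1 - k`: `|p - k| + |p - (m - 1 - k)|` only grows as `p` moves away from
the centre `(m - 1) / 2`, and `r` is at least as far from it as `p`. -/
theorem Nat.sum_range_dist_le {m p r : ℕ} (hp : m ≤ p + r + 1) (hpr : p ≤ r) :
    ∑ k ∈ range m, Nat.dist p k ≤ ∑ k ∈ range m, Nat.dist r k := by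
  have hpair : ∀ k ∈ range m,
      Nat.dist p k + Nat.dist p (m - 1 - k) ≤ Nat.dist r k + Nat.dist r (m - 1 - k) := by
    intro k hk
    rw [mem_range] at hk
    simp only [Nat.dist]
    omega
  have := sum_le_sum hpair
  rw [sum_add_distrib, sum_add_distrib, sum_range_reflect (Nat.dist p),
    sum_range_reflect (Nat.dist r)] at this
  omega

/-- Distance in a tree made of a path `0, 1, 2, …` with each vertex `u` hanging at height
`depth u` above the path vertex `foot u`; distinct vertices with a common foot meet at it. -/
def footDist {V : Type*} [DecidableEq V] (foot depth : V → ℕ) (u v : V) : ℕ :=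
  if u = v then 0 else Nat.dist (foot u) (foot v) + depth u + depth v

theorem footDist_self {V : Type*} [DecidableEq V] (foot depth : V → ℕ) (u : V) :
    footDist foot depth u u = 0 := if_pos rfl

theorem footDist_triangle {V : Type*} [DecidableEq V] (foot depth : V → ℕ) (u v w : V) :
    footDist foot depth u w ≤ footDist foot depth u v + footDist foot depth v w := by
  unfold footDist
  split_ifs <;> subst_vars <;> simp only [Nat.dist, not_true_eq_false] at * <;> omega

namespace Tpend2

def foot (n a b : ℕ) (u : Fin n) : ℕ :=
  if u.val = n - 1 then b - 1 else if u.val = n - 2 then a - 1 else u.val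

def depth (n : ℕ) (u : Fin n) : ℕ := if n - 2 ≤ u.val then 1 else 0

variable {n a b : ℕ}

theorem adj_iff {u v : Fin n} : (Tpend2 n a b).Adj u v ↔ u.val ≠ v.val ∧
    ((u.val + 1 = v.val ∧ v.val ≤ n - 3) ∨ (u.val = a - 1 ∧ v.val = n - 2) ∨
      (u.val = b - 1 ∧ v.val = n - 1) ∨ (v.val + 1 = u.val ∧ u.val ≤ n - 3) ∨
      (v.val = a - 1 ∧ u.val = n - 2) ∨ (v.val = b - 1 ∧ u.val = n - 1)) := by
  rw [Tpend2, fromRel_adj, Fin.val_ne_iff]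
  tauto

theorem exists_walk_of_add_eq (d : ℕ) {u v : Fin n} (h : u.val + d = v.val)
    (hv : v.val ≤ n - 3) : ∃ p : (Tpend2 n a b).Walk u v, p.length = d := by
  induction d generalizing u with
  | zero =>
    obtain rfl : u = v := Fin.ext h
    exact ⟨.nil, rfl⟩
  | succ d ih =>
    obtain ⟨p, hp⟩ := ih (u := ⟨u.val + 1, by omega⟩) (by simp only; omega)
    have hadj : (Tpend2 n a b).Adj u ⟨u.val + 1, by omega⟩ :=
      adj_iff.2 ⟨by simp, .inl ⟨rfl, by simp only; omega⟩⟩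
    exact ⟨.cons hadj p, by rw [Walk.length_cons, hp]⟩

theorem exists_walk_length_eq_dist {u v : Fin n} (hu : u.val ≤ n - 3) (hv : v.val ≤ n - 3) :
    ∃ p : (Tpend2 n a b).Walk u v, p.length = Nat.dist u v := by
  rcases le_total u.val v.val with h | h
  · obtain ⟨p, hp⟩ := exists_walk_of_add_eq (a := a) (b := b) (u := u) (v.val - u.val)
      (by omega) hv
    exact ⟨p, by rw [hp, Nat.dist, Nat.sub_eq_zero_of_le h, zero_add]⟩
  · obtain ⟨p, hp⟩ := exists_walk_of_add_eq (a := a) (b := b) (u := v) (u.val - v.val)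
      (by omega) hu
    exact ⟨p.reverse,
      by rw [Walk.length_reverse, hp, Nat.dist, Nat.sub_eq_zero_of_le h, add_zero]⟩

section

variable (hn : 3 ≤ n) (ha : a ≤ n - 2) (hb : b ≤ n - 2)
include hn ha hb

theorem foot_le (u : Fin n) : foot n a b u ≤ n - 3 := by
  unfold foot
  split_ifs <;> omega

theorem exists_walk_to_foot (u : Fin n) :
    ∃ x : Fin n, x.val = foot n a b u ∧ ∃ p : (Tpend2 n a b).Walk u x, p.length = depth n u := by
  refine ⟨⟨foot n a b u, by have := foot_le hn ha hb u; omega⟩, rfl, ?_⟩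
  have hu := u.isLt
  unfold depth
  split_ifs with h
  · refine ⟨.cons (adj_iff.2 ?_) .nil, by rw [Walk.length_cons, Walk.length_nil]⟩
    dsimp only [foot]
    split_ifs <;> omega
  · refine ⟨Walk.nil.copy rfl (Fin.ext ?_), by rw [Walk.length_copy, Walk.length_nil]⟩
    dsimp only [foot]
    split_ifs <;> omega

theorem footDist_le_one_of_adj {u v : Fin n} (h : (Tpend2 n a b).Adj u v) :
    footDist (foot n a b) (depth n) u v ≤ 1 := by
  have hu := u.isLt
  have hv := v.isLt
  rw [adj_iff] at h
  unfold footDist foot depth Nat.dist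
  split_ifs <;> omega

theorem dist_eq (u v : Fin n) :
    (Tpend2 n a b).dist u v = footDist (foot n a b) (depth n) u v := by
  obtain ⟨x, hx, pu, hpu⟩ := exists_walk_to_foot hn ha hb u
  obtain ⟨y, hy, pv, hpv⟩ := exists_walk_to_foot hn ha hb v
  obtain ⟨q, hq⟩ := exists_walk_length_eq_dist (a := a) (b := b)
    (hx ▸ foot_le hn ha hb u) (hy ▸ foot_le hn ha hb v)
  rcases eq_or_ne u v with rfl | huv
  · rw [dist_self, footDist_self]
  refine dist_eq_of_walk_length_eq (footDist_self _ _) (footDist_triangle _ _)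
    (fun _ _ => footDist_le_one_of_adj hn ha hb) (pu.append (q.append pv.reverse)) ?_
  rw [Walk.length_append, Walk.length_append, Walk.length_reverse, hpu, hq, hpv, hx, hy,
    footDist, if_neg huv]
  ring

end

section

variable {m a b : ℕ}

theorem distSum_last (hm : 1 ≤ m) (ha : a ≤ m) (hb : b ≤ m) :
    distSum (Tpend2 (m + 2) a b) (Fin.last (m + 1))
      = ∑ k ∈ range m, Nat.dist (b - 1) k + m + Nat.dist (b - 1) (a - 1) + 2 := by
  have hdist := dist_eq (a := a) (b := b) (by omega : 3 ≤ m + 2) (by omega) (by omega)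
  simp only [distSum, hdist, Fin.sum_univ_castSucc, footDist_self, add_zero]
  have hpath : ∀ i : Fin m, footDist (foot (m + 2) a b) (depth (m + 2)) (Fin.last (m + 1))
      i.castSucc.castSucc = Nat.dist (b - 1) i + 1 := fun i => by
    have hi := i.isLt
    simp only [footDist, foot, depth, Fin.ext_iff, Fin.val_last, Fin.val_castSucc]
    split_ifs <;> omega
  have hpendant : footDist (foot (m + 2) a b) (depth (m + 2)) (Fin.last (m + 1))
      (Fin.last m).castSucc = Nat.dist (b - 1) (a - 1) + 2 := by
    simp only [footDist, foot, depth, Fin.ext_iff, Fin.val_last, Fin.val_castSucc]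
    split_ifs <;> omega
  rw [sum_congr rfl fun i _ => hpath i, hpendant, sum_add_distrib, Fin.sum_univ_eq_sum_range
    (Nat.dist (b - 1)), sum_const, card_univ, Fintype.card_fin, smul_eq_mul, mul_one]
  ring

theorem dist_eq_dist_of_ne_last {b' : ℕ} (hm : 1 ≤ m) (ha : a ≤ m) (hb : b ≤ m) (hb' : b' ≤ m)
    {u v : Fin (m + 2)} (hu : u ≠ Fin.last (m + 1)) (hv : v ≠ Fin.last (m + 1)) :
    (Tpend2 (m + 2) a b).dist u v = (Tpend2 (m + 2) a b').dist u v := by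
  rw [dist_eq (by omega) (by omega) (by omega), dist_eq (by omega) (by omega) (by omega)]
  rw [Ne, Fin.ext_iff, Fin.val_last] at hu hv
  simp only [footDist, foot]
  split_ifs <;> omega

theorem distSum_last_lt {c : ℕ} (hab : a ≤ b) (hbc : b < c) (hc : c ≤ m) (hmid : m < b + c) :
    distSum (Tpend2 (m + 2) a b) (Fin.last (m + 1))
      < distSum (Tpend2 (m + 2) a c) (Fin.last (m + 1)) := by
  rw [distSum_last (by omega) (by omega) (by omega), distSum_last (by omega) (by omega) hc]
  have hpath := Nat.sum_range_dist_le (m := m) (p := b - 1) (r := c - 1) (by omega) (by omega)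
  have hpendant : Nat.dist (b - 1) (a - 1) < Nat.dist (c - 1) (a - 1) := by
    simp only [Nat.dist]
    omega
  omega

end

end Tpend2

theorem stmt14_general (n s a b : ℕ) (ha : s + 1 ≤ a) (hab : a ≤ b) (hb : b ≤ n - s - 2) :
    wiener (Tpend2 n a b) ≤ wiener (Tpend2 n a (n - s - 2)) ∧
      (wiener (Tpend2 n a b) = wiener (Tpend2 n a (n - s - 2)) ↔ b = n - s - 2) := by
  obtain ⟨m, rfl⟩ : ∃ m, n = m + 2 := ⟨n - 2, by omega⟩
  rw [show m + 2 - s - 2 = m - s by omega] at hb ⊢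
  rcases hb.lt_or_eq with hlt | rfl
  · have hW := wiener_add_distSum_eq (G := Tpend2 (m + 2) a b) (G' := Tpend2 (m + 2) a (m - s))
      (Fin.last (m + 1)) fun u v hu hv =>
        Tpend2.dist_eq_dist_of_ne_last (by omega) (by omega) (by omega) (by omega) hu hv
    have hr := Tpend2.distSum_last_lt (m := m) hab hlt (by omega) (by omega)
    omega
  · simp

theorem stmt14 (n s a b : ℕ) (hs : 1 ≤ s) (hn : 2 * s + 5 ≤ n)
    (ha : s + 1 ≤ a) (hab : a ≤ b) (hb : b ≤ n - s - 2) :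
    wiener (Tpend2 n a b) ≤ wiener (Tpend2 n a (n - s - 2)) ∧
      (wiener (Tpend2 n a b) = wiener (Tpend2 n a (n - s - 2)) ↔ b = n - s - 2) :=
  stmt14_general n s a b ha hab hb
end

section
/- The conditional diameter of the tree T^{s+1, n-s-2}_n equals n - 2s - 1 for n \ge 2s + 5. -/
open SimpleGraph Finset

namespace Aux19

variable (n s : ℕ)

/-- position of a vertex -/
def pN (v : Fin n) : ℕ := if v.val = n-2 then s else if v.val = n-1 then n-s-3 else v.val
/-- pendant indicator -/
def cN (n : ℕ) (v : Fin n) : ℕ := if n-2 ≤ v.val then 1 else 0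

abbrev GG := Tpend2 n (s+1) (n - s - 2)

variable {n s}

lemma pN_path {v : Fin n} (h : v.val ≤ n - 3) (hn : 2*s+5 ≤ n) : pN n s v = v.val := by
  unfold pN; split_ifs with h1 h2 <;> omega

lemma pN_le (hn : 2*s+5 ≤ n) (v : Fin n) : pN n s v ≤ n - 3 := by
  have := v.isLt
  unfold pN; split_ifs <;> omega

lemma cN_le (v : Fin n) : cN n v ≤ 1 := by unfold cN; split_ifs <;> omega

lemma cN_zero {v : Fin n} (hn : 2*s+5 ≤ n) (h : cN n v = 0) : v.val ≤ n - 3 := by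
  have := v.isLt
  unfold cN at h; split_ifs at h <;> omega

lemma pN_inj {v w : Fin n} (hn : 2*s+5 ≤ n) (hv : v.val ≤ n-3) (hw : w.val ≤ n-3)
    (h : pN n s v = pN n s w) : v = w := by
  rw [pN_path hv hn, pN_path hw hn] at h
  exact Fin.ext h

lemma adj_iff {u v : Fin n} : (GG n s).Adj u v ↔ u ≠ v ∧
    (((u.val + 1 = v.val ∧ v.val ≤ n - 3) ∨ (u.val = s+1-1 ∧ v.val = n-2) ∨
      (u.val = n-s-2-1 ∧ v.val = n-1)) ∨
     ((v.val + 1 = u.val ∧ u.val ≤ n - 3) ∨ (v.val = s+1-1 ∧ u.val = n-2) ∨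
      (v.val = n-s-2-1 ∧ u.val = n-1))) :=
  SimpleGraph.fromRel_adj _ _ _

lemma adj_path (hn : 2*s+5 ≤ n) (k : ℕ) (hk : k + 1 ≤ n - 3) :
    (GG n s).Adj ⟨k, by omega⟩ ⟨k+1, by omega⟩ :=
  adj_iff.mpr ⟨Fin.ne_of_val_ne (by simp), Or.inl (Or.inl ⟨rfl, hk⟩)⟩

lemma adj_p1 (hn : 2*s+5 ≤ n) (hs : 1 ≤ s) :
    (GG n s).Adj ⟨s, by omega⟩ ⟨n-2, by omega⟩ :=
  adj_iff.mpr ⟨Fin.ne_of_val_ne (by simp; omega), Or.inl (Or.inr (Or.inl ⟨by simp, rfl⟩))⟩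

lemma adj_p2 (hn : 2*s+5 ≤ n) (hs : 1 ≤ s) :
    (GG n s).Adj ⟨n-s-3, by omega⟩ ⟨n-1, by omega⟩ :=
  adj_iff.mpr ⟨Fin.ne_of_val_ne (by simp; omega), Or.inl (Or.inr (Or.inr ⟨by simp; omega, rfl⟩))⟩

lemma exists_walk_path (hn : 2*s+5 ≤ n) :
    ∀ (d a : ℕ) (h : a + d ≤ n - 3),
    ∃ w : (GG n s).Walk ⟨a, by omega⟩ ⟨a + d, by omega⟩, w.length = d := by
  intro d
  induction d with
  | zero => intro a h; exact ⟨SimpleGraph.Walk.nil, rfl⟩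
  | succ d ih =>
    intro a h
    obtain ⟨w, hw⟩ := ih a (by omega)
    exact ⟨w.concat (adj_path hn (a+d) (by omega)), by simp [hw]⟩

/-- distance (as formula) upper bound material -/
def fmN (n s : ℕ) (x y : Fin n) : ℕ :=
  (pN n s x - pN n s y) + (pN n s y - pN n s x) + cN n x + cN n y

lemma fmN_comm (x y : Fin n) : fmN n s x y = fmN n s y x := by unfold fmN; omega

lemma exists_walk_host (hn : 2*s+5 ≤ n) (hs : 1 ≤ s) (x : Fin n) :
    ∃ w : (GG n s).Walk x ⟨pN n s x, by have := pN_le hn x; omega⟩, w.length ≤ cN n x := by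
  by_cases h1 : x.val = n - 2
  · have hx : x = ⟨n-2, by omega⟩ := Fin.ext h1
    have hp : pN n s x = s := by unfold pN; rw [h1]; simp
    refine ⟨((adj_p1 hn hs).symm.toWalk.copy hx.symm (by congr 1; rw [hp])), ?_⟩
    simp [cN, h1]
  · by_cases h2 : x.val = n - 1
    · have hx : x = ⟨n-1, by omega⟩ := Fin.ext h2
      have hp : pN n s x = n-s-3 := by
        unfold pN; rw [h2, if_neg (by omega), if_pos rfl]
      refine ⟨((adj_p2 hn hs).symm.toWalk.copy hx.symm (by congr 1; rw [hp])), ?_⟩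
      simp [cN, h2]
      rw [if_pos (by omega)]
    · have hp : pN n s x = x.val := by unfold pN; rw [if_neg h1, if_neg h2]
      refine ⟨(SimpleGraph.Walk.nil.copy rfl (by ext; simp [hp])), by simp⟩

lemma exists_walk_hosts (hn : 2*s+5 ≤ n) (a b : ℕ) (ha : a ≤ n-3) (hb : b ≤ n-3) :
    ∃ w : (GG n s).Walk ⟨a, by omega⟩ ⟨b, by omega⟩, w.length = (a - b) + (b - a) := by
  rcases Nat.le_total a b with h | h
  · obtain ⟨w, hw⟩ := exists_walk_path hn (b - a) a (by omega)
    refine ⟨w.copy rfl (by congr 1; omega), by simp [hw]; omega⟩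
  · obtain ⟨w, hw⟩ := exists_walk_path hn (a - b) b (by omega)
    refine ⟨(w.copy rfl (by congr 1; omega)).reverse, by simp [hw]; omega⟩

lemma dist_le_fm (hn : 2*s+5 ≤ n) (hs : 1 ≤ s) (x y : Fin n) :
    (GG n s).dist x y ≤ fmN n s x y := by
  obtain ⟨w1, h1⟩ := exists_walk_host hn hs x
  obtain ⟨w2, h2⟩ := exists_walk_host hn hs y
  obtain ⟨w3, h3⟩ := exists_walk_hosts hn (pN n s x) (pN n s y) (pN_le hn x) (pN_le hn y)
  refine le_trans (SimpleGraph.dist_le (w1.append (w3.append w2.reverse))) ?_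
  simp only [SimpleGraph.Walk.length_append, SimpleGraph.Walk.length_reverse]
  unfold fmN; omega

lemma reachable_all (hn : 2*s+5 ≤ n) (hs : 1 ≤ s) (x y : Fin n) :
    (GG n s).Reachable x y := by
  obtain ⟨w1, h1⟩ := exists_walk_host hn hs x
  obtain ⟨w2, h2⟩ := exists_walk_host hn hs y
  obtain ⟨w3, h3⟩ := exists_walk_hosts hn (pN n s x) (pN n s y) (pN_le hn x) (pN_le hn y)
  exact ⟨w1.append (w3.append w2.reverse)⟩

lemma lip_adj (hn : 2*s+5 ≤ n) {u v : Fin n} (h : (GG n s).Adj u v) :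
    pN n s u ≤ pN n s v + 1 ∧ pN n s v ≤ pN n s u + 1 := by
  have hu := u.isLt; have hv := v.isLt
  rcases adj_iff.mp h with ⟨hne, hrel⟩
  unfold pN
  rcases hrel with (⟨h1, h2⟩ | ⟨h1, h2⟩ | ⟨h1, h2⟩) | (⟨h1, h2⟩ | ⟨h1, h2⟩ | ⟨h1, h2⟩) <;>
    split_ifs <;> omega

lemma lip_walk (hn : 2*s+5 ≤ n) {u v : Fin n} (w : (GG n s).Walk u v) :
    pN n s u ≤ pN n s v + w.length ∧ pN n s v ≤ pN n s u + w.length := by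
  induction w with
  | nil => simp
  | cons h w ih =>
    have := lip_adj hn h
    simp only [SimpleGraph.Walk.length_cons]
    omega

lemma lip_dist (hn : 2*s+5 ≤ n) (hs : 1 ≤ s) (x y : Fin n) :
    pN n s x ≤ pN n s y + (GG n s).dist x y ∧ pN n s y ≤ pN n s x + (GG n s).dist x y := by
  obtain ⟨w, hw⟩ := (reachable_all hn hs x y).exists_walk_length_eq_dist
  have := lip_walk hn w
  omega

/-! ### counting lemmas -/

lemma card_le_of_val_bounds {S : Finset (Fin n)} {lo hi : ℕ}
    (h : ∀ v ∈ S, lo ≤ v.val ∧ v.val ≤ hi) : S.card ≤ hi + 1 - lo := by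
  have hsub : S.image Fin.val ⊆ Finset.Icc lo hi := by
    intro m hm
    obtain ⟨v, hv, rfl⟩ := Finset.mem_image.mp hm
    simpa [Finset.mem_Icc] using h v hv
  have := Finset.card_le_card hsub
  rwa [Finset.card_image_of_injective _ Fin.val_injective, Nat.card_Icc] at this

/-! ### the extremal pair of sets -/

def A0 (n s : ℕ) (hn : 2*s+5 ≤ n) : Finset (Fin n) :=
  (Finset.range s).attachFin (fun m hm => by simp at hm; omega)

def B0 (n s : ℕ) (hn : 2*s+5 ≤ n) : Finset (Fin n) :=
  (Finset.Icc (n-2-s) (n-3)).attachFin (fun m hm => by simp [Finset.mem_Icc] at hm; omega)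

lemma card_A0 (hn : 2*s+5 ≤ n) : (A0 n s hn).card = s := by
  rw [A0, Finset.card_attachFin, Finset.card_range]

lemma card_B0 (hn : 2*s+5 ≤ n) : (B0 n s hn).card = s := by
  rw [B0, Finset.card_attachFin, Nat.card_Icc]; omega

lemma setDist_A0_B0 (hn : 2*s+5 ≤ n) (hs : 1 ≤ s) :
    setDist (GG n s) (A0 n s hn) (B0 n s hn) = n - 2*s - 1 := by
  have hmemA : (⟨s-1, by omega⟩ : Fin n) ∈ A0 n s hn := by
    rw [A0, Finset.mem_attachFin]; simp; omega
  have hmemB : (⟨n-2-s, by omega⟩ : Fin n) ∈ B0 n s hn := by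
    rw [B0, Finset.mem_attachFin]; simp [Finset.mem_Icc]; omega
  have hlb : ∀ x ∈ A0 n s hn, ∀ y ∈ B0 n s hn, n - 2*s - 1 ≤ (GG n s).dist x y := by
    intro x hx y hy
    rw [A0, Finset.mem_attachFin, Finset.mem_range] at hx
    rw [B0, Finset.mem_attachFin, Finset.mem_Icc] at hy
    have hpx : pN n s x = x.val := pN_path (by omega) hn
    have hpy : pN n s y = y.val := pN_path (by omega) hn
    have := (lip_dist hn hs x y).2
    omega
  have hdist : (GG n s).dist ⟨s-1, by omega⟩ ⟨n-2-s, by omega⟩ = n - 2*s - 1 := by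
    have h1 := hlb _ hmemA _ hmemB
    have h2 : (GG n s).dist ⟨s-1, by omega⟩ ⟨n-2-s, by omega⟩ ≤ n - 2*s - 1 := by
      have := dist_le_fm hn hs (⟨s-1, by omega⟩ : Fin n) ⟨n-2-s, by omega⟩
      have e1 : pN n s (⟨s-1, by omega⟩ : Fin n) = s-1 := pN_path (by simp; omega) hn
      have e2 : pN n s (⟨n-2-s, by omega⟩ : Fin n) = n-2-s := pN_path (by simp; omega) hn
      have e3 : cN n (⟨s-1, by omega⟩ : Fin n) = 0 := by unfold cN; rw [if_neg (by simp; omega)]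
      have e4 : cN n (⟨n-2-s, by omega⟩ : Fin n) = 0 := by unfold cN; rw [if_neg (by simp; omega)]
      unfold fmN at this
      omega
    omega
  unfold setDist
  refine le_antisymm (Nat.sInf_le ⟨_, hmemA, _, hmemB, hdist⟩) ?_
  refine le_csInf ⟨_, ⟨_, hmemA, _, hmemB, hdist⟩⟩ ?_
  rintro d ⟨x, hx, y, hy, rfl⟩
  exact hlb x hx y hy

/-! ### sorted list machinery -/

def rr (n s : ℕ) (v w : Fin n) : Prop :=
  pN n s v < pN n s w ∨ (pN n s v = pN n s w ∧ v.val ≤ w.val)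

instance : DecidableRel (rr n s) := fun v w =>
  inferInstanceAs (Decidable (pN n s v < pN n s w ∨ (pN n s v = pN n s w ∧ v.val ≤ w.val)))

instance : IsTrans (Fin n) (rr n s) :=
  ⟨fun a b c hab hbc => by unfold rr at *; omega⟩

instance : IsAntisymm (Fin n) (rr n s) :=
  ⟨fun a b h1 h2 => by unfold rr at *; exact Fin.ext (by omega)⟩

instance : IsTotal (Fin n) (rr n s) :=
  ⟨fun a b => by unfold rr; omega⟩

variable (n) in
def cross (A : Finset (Fin n)) : List (Fin n) → ℕ
  | x :: y :: l => (if (x ∈ A ↔ y ∈ A) then 0 else 1) + cross A (y :: l)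
  | _ => 0

variable (n) in
def hasBA (A : Finset (Fin n)) : List (Fin n) → Prop
  | x :: y :: l => ((x ∉ A) ∧ y ∈ A) ∨ hasBA A (y :: l)
  | _ => False

variable (n) in
def hasAB (A : Finset (Fin n)) : List (Fin n) → Prop
  | x :: y :: l => (x ∈ A ∧ y ∉ A) ∨ hasAB A (y :: l)
  | _ => False

variable {A : Finset (Fin n)}

lemma cross_pos_of_hasBA : ∀ ℓ : List (Fin n), hasBA n A ℓ → 1 ≤ cross n A ℓ
  | x :: y :: l, h => by
    rcases h with ⟨h1, h2⟩ | h
    · simp only [cross]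
      rw [if_neg (fun hc => absurd (hc.mpr h2) h1)]
      omega
    · have := cross_pos_of_hasBA (y :: l) h
      simp [cross]; omega

lemma cross_pos_of_hasAB : ∀ ℓ : List (Fin n), hasAB n A ℓ → 1 ≤ cross n A ℓ
  | x :: y :: l, h => by
    rcases h with ⟨h1, h2⟩ | h
    · simp only [cross]
      rw [if_neg (fun hc => absurd (hc.mp h1) h2)]
      omega
    · have := cross_pos_of_hasAB (y :: l) h
      simp [cross]; omega

lemma two_le_cross : ∀ ℓ : List (Fin n), hasBA n A ℓ → hasAB n A ℓ → 2 ≤ cross n A ℓ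
  | x :: y :: l, hba, hab => by
    rcases hba with ⟨h1, h2⟩ | hba
    · rcases hab with ⟨h3, h4⟩ | hab
      · exact absurd h3 h1
      · have := cross_pos_of_hasAB (y :: l) hab
        simp only [cross]
        rw [if_neg (fun hc => absurd (hc.mpr h2) h1)]
        omega
    · rcases hab with ⟨h3, h4⟩ | hab
      · have := cross_pos_of_hasBA (y :: l) hba
        simp only [cross]
        rw [if_neg (fun hc => absurd (hc.mp h3) h4)]
        omega
      · have := two_le_cross (y :: l) hba hab
        simp [cross]; omega

lemma headBA : ∀ (l : List (Fin n)) (x : Fin n), x ∉ A → (∃ a ∈ l, a ∈ A) →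
    hasBA n A (x :: l)
  | [], x, hx, ⟨a, ha, _⟩ => by simp at ha
  | z :: l', x, hx, ⟨a, ha, haA⟩ => by
    by_cases hz : z ∈ A
    · exact Or.inl ⟨hx, hz⟩
    · refine Or.inr (headBA l' z hz ⟨a, ?_, haA⟩)
      rcases List.mem_cons.mp ha with rfl | h
      · exact absurd haA hz
      · exact h

lemma headAB : ∀ (l : List (Fin n)) (x : Fin n), x ∈ A → (∃ a ∈ l, a ∉ A) →
    hasAB n A (x :: l)
  | [], x, hx, ⟨a, ha, _⟩ => by simp at ha
  | z :: l', x, hx, ⟨a, ha, haA⟩ => by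
    by_cases hz : z ∈ A
    · refine Or.inr (headAB l' z hz ⟨a, ?_, haA⟩)
      rcases List.mem_cons.mp ha with rfl | h
      · exact absurd hz haA
      · exact h
    · exact Or.inl ⟨hx, hz⟩

lemma hasBA_cons : ∀ (l : List (Fin n)) (x : Fin n), hasBA n A l → hasBA n A (x :: l)
  | y :: l', x, h => Or.inr h
  | [], x, h => h.elim

lemma hasAB_cons : ∀ (l : List (Fin n)) (x : Fin n), hasAB n A l → hasAB n A (x :: l)
  | y :: l', x, h => Or.inr h
  | [], x, h => h.elim

lemma sorted_hasBA : ∀ ℓ : List (Fin n), List.Pairwise (rr n s) ℓ →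
    ∀ y ∈ ℓ, ∀ a ∈ ℓ, y ∉ A → a ∈ A → pN n s y < pN n s a → hasBA n A ℓ
  | [], _, y, hy, _, _, _, _, _ => by simp at hy
  | x :: l, hsort, y, hy, a, ha, hyA, haA, hlt => by
    rw [List.pairwise_cons] at hsort
    by_cases hxy : y = x
    · refine headBA l x (hxy ▸ hyA) ⟨a, ?_, haA⟩
      rcases List.mem_cons.mp ha with rfl | h
      · exact absurd haA (hxy ▸ hyA)
      · exact h
    · have hyl : y ∈ l := by rcases List.mem_cons.mp hy with rfl | h; exact absurd rfl hxy; exact h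
      rcases List.mem_cons.mp ha with rfl | hal
      · have := hsort.1 y hyl
        unfold rr at this; omega
      · exact hasBA_cons l x (sorted_hasBA l hsort.2 y hyl a hal hyA haA hlt)

lemma sorted_hasAB : ∀ ℓ : List (Fin n), List.Pairwise (rr n s) ℓ →
    ∀ a ∈ ℓ, ∀ y ∈ ℓ, a ∈ A → y ∉ A → pN n s a < pN n s y → hasAB n A ℓ
  | [], _, y, hy, _, _, _, _, _ => by simp at hy
  | x :: l, hsort, a, ha, y, hy, haA, hyA, hlt => by
    rw [List.pairwise_cons] at hsort
    by_cases hax : a = x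
    · refine headAB l x (hax ▸ haA) ⟨y, ?_, hyA⟩
      rcases List.mem_cons.mp hy with rfl | h
      · exact absurd (hax ▸ haA) hyA
      · exact h
    · have hal : a ∈ l := by rcases List.mem_cons.mp ha with rfl | h; exact absurd rfl hax; exact h
      rcases List.mem_cons.mp hy with rfl | hyl
      · have := hsort.1 a hal
        unfold rr at this; omega
      · exact hasAB_cons l x (sorted_hasAB l hsort.2 a hal y hyl haA hyA hlt)

/-! ### the gap-sum estimate -/

variable {B : Finset (Fin n)}

lemma gap_bound (hn : 2*s+5 ≤ n)
    (hd : ∀ x ∈ A, ∀ y ∈ B, n - 2*s ≤ fmN n s x y)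
    {v w : Fin n} (hv : v ∈ A ∪ B) (hw : w ∈ A ∪ B) (hne : v ≠ w) (hr : rr n s v w) :
    pN n s v + 1 + (n - 2*s - 1) * (if (v ∈ A ↔ w ∈ A) then 0 else 1)
      ≤ pN n s w + cN n v + cN n w := by
  have hvw : pN n s v ≤ pN n s w := by unfold rr at hr; omega
  by_cases hiff : (v ∈ A ↔ w ∈ A)
  · rw [if_pos hiff, mul_zero, add_zero]
    by_cases hc : cN n v = 0 ∧ cN n w = 0
    · have h1 := cN_zero (s := s) hn hc.1
      have h2 := cN_zero (s := s) hn hc.2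
      have : pN n s v ≠ pN n s w := fun h => hne (pN_inj hn h1 h2 h)
      omega
    · have := cN_le v; have := cN_le w
      omega
  · rw [if_neg hiff, mul_one]
    have hfm : n - 2*s ≤ fmN n s v w := by
      by_cases hvA : v ∈ A
      · have hwB : w ∈ B := by
          rcases Finset.mem_union.mp hw with hwA | hwB
          · exact absurd ⟨fun _ => hwA, fun _ => hvA⟩ hiff
          · exact hwB
        exact hd v hvA w hwB
      · have hvB : v ∈ B := (Finset.mem_union.mp hv).resolve_left hvA
        have hwA : w ∈ A := by
          by_contra hwA
          exact hiff ⟨fun h => absurd h hvA, fun h => absurd h hwA⟩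
        rw [fmN_comm]
        exact hd w hwA v hvB
    unfold fmN at hfm
    have := cN_le v; have := cN_le w
    omega

lemma gapsum (hn : 2*s+5 ≤ n)
    (hd : ∀ x ∈ A, ∀ y ∈ B, n - 2*s ≤ fmN n s x y) :
    ∀ (ℓ : List (Fin n)) (v : Fin n), List.Pairwise (rr n s) (v :: ℓ) → (v :: ℓ).Nodup →
    (∀ w ∈ v :: ℓ, w ∈ A ∪ B) →
    pN n s v + ℓ.length + (n - 2*s - 1) * cross n A (v :: ℓ) + cN n v
        + cN n ((v :: ℓ).getLast (by simp))
      ≤ pN n s ((v :: ℓ).getLast (by simp)) + 2 * ((v :: ℓ).map (cN n)).sum := by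
  intro ℓ
  induction ℓ with
  | nil =>
    intro v _ _ _
    simp [cross]
    omega
  | cons w ℓ ih =>
    intro v hsort hnd hmem
    have hlast : ((v :: w :: ℓ).getLast (by simp)) = ((w :: ℓ).getLast (by simp)) :=
      List.getLast_cons_cons
    have hr : rr n s v w := (List.pairwise_cons.mp hsort).1 w (by simp)
    have hne : v ≠ w := by
      intro h; subst h; exact (List.nodup_cons.mp hnd).1 (by simp)
    have hgap := gap_bound hn hd (hmem v (by simp)) (hmem w (by simp)) hne hr
    have IH := ih w (List.pairwise_cons.mp hsort).2 (List.nodup_cons.mp hnd).2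
      (fun x hx => hmem x (List.mem_cons_of_mem v hx))
    rw [hlast]
    have hcross : cross n A (v :: w :: ℓ) =
        (if (v ∈ A ↔ w ∈ A) then 0 else 1) + cross n A (w :: ℓ) := rfl
    rw [hcross, Nat.mul_add]
    simp only [List.map_cons, List.sum_cons, List.length_cons] at IH ⊢
    omega

lemma list_csum_le (hn : 2*s+5 ≤ n) :
    ∀ (ℓ : List (Fin n)) (U : Finset (Fin n)), ℓ.Nodup → (∀ w ∈ ℓ, w ∈ U) →
      (ℓ.map (cN n)).sum ≤ ∑ w ∈ U, cN n w
  | [], U, _, _ => by simp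
  | x :: ℓ, U, hnd, hmem => by
    have hx : x ∈ U := hmem x (by simp)
    have IH := list_csum_le hn ℓ (U.erase x) (List.nodup_cons.mp hnd).2
      (fun w hw => Finset.mem_erase.mpr ⟨fun h => (List.nodup_cons.mp hnd).1 (h ▸ hw), hmem w (by simp [hw])⟩)
    rw [← Finset.add_sum_erase U (cN n) hx]
    simpa using Nat.add_le_add_left IH (cN n x)

lemma finset_csum_le (hn : 2*s+5 ≤ n) (U : Finset (Fin n)) : ∑ w ∈ U, cN n w ≤ 2 := by
  have h1 : ∑ w ∈ U, cN n w = (U.filter (fun w => n-2 ≤ w.val)).card := by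
    rw [Finset.card_eq_sum_ones, Finset.sum_filter]
    rfl
  have h2 : U.filter (fun w => n-2 ≤ w.val) ⊆ {⟨n-2, by omega⟩, ⟨n-1, by omega⟩} := by
    intro v hv
    rw [Finset.mem_filter] at hv
    have := v.isLt
    simp only [Finset.mem_insert, Finset.mem_singleton]
    rcases Nat.lt_or_ge v.val (n-1) with h | h
    · exact Or.inl (Fin.ext (by show v.val = n - 2; omega))
    · exact Or.inr (Fin.ext (by show v.val = n - 1; omega))
  have h3 := Finset.card_le_card h2
  have h4 : ({⟨n-2, by omega⟩, ⟨n-1, by omega⟩} : Finset (Fin n)).card ≤ 2 :=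
    le_trans (Finset.card_insert_le _ _) (by simp)
  omega

/-- the dichotomy: all of `A` lies left of all of `B`, or conversely -/
lemma dichotomy (hn : 2*s+5 ≤ n) (hs : 1 ≤ s)
    (hA : A.card = s) (hB : B.card = s)
    (hd : ∀ x ∈ A, ∀ y ∈ B, n - 2*s ≤ fmN n s x y)
    (hdisj : ∀ x, x ∈ A → x ∈ B → False) :
    (∀ x ∈ A, ∀ y ∈ B, pN n s x < pN n s y) ∨ (∀ x ∈ A, ∀ y ∈ B, pN n s y < pN n s x) := by
  by_contra hcon
  push_neg at hcon
  obtain ⟨⟨a1, ha1, y1, hy1, h1⟩, ⟨a2, ha2, y2, hy2, h2⟩⟩ := hcon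
  -- strictness
  have hstrict : ∀ x ∈ A, ∀ y ∈ B, pN n s x ≠ pN n s y := by
    intro x hx y hy he
    have h5 := hd x hx y hy
    have c1 := cN_le (n := n) x
    have c2 := cN_le (n := n) y
    unfold fmN at h5
    omega
  have hlt1 : pN n s y1 < pN n s a1 :=
    lt_of_le_of_ne h1 (fun h => hstrict a1 ha1 y1 hy1 h.symm)
  have hlt2 : pN n s a2 < pN n s y2 :=
    lt_of_le_of_ne h2 (hstrict a2 ha2 y2 hy2)
  set U := A ∪ B with hU
  set ℓ := Finset.sort U (rr n s) with hℓ
  have hsorted : List.Pairwise (rr n s) ℓ := Finset.pairwise_sort _ _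
  have hnd : ℓ.Nodup := Finset.sort_nodup _ _
  have hmem : ∀ w ∈ ℓ, w ∈ U := fun w hw => (Finset.mem_sort _).mp hw
  have hmem' : ∀ w ∈ U, w ∈ ℓ := fun w hw => (Finset.mem_sort _).mpr hw
  have hBA : hasBA n A ℓ := sorted_hasBA ℓ hsorted y1
    (hmem' _ (Finset.mem_union_right _ hy1)) a1 (hmem' _ (Finset.mem_union_left _ ha1))
    (fun h => hdisj y1 h hy1) ha1 hlt1
  have hAB : hasAB n A ℓ := sorted_hasAB ℓ hsorted a2
    (hmem' _ (Finset.mem_union_left _ ha2)) y2 (hmem' _ (Finset.mem_union_right _ hy2))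
    ha2 (fun h => hdisj y2 h hy2) hlt2
  have hcr := two_le_cross ℓ hBA hAB
  have hlen : ℓ.length = 2 * s := by
    rw [Finset.length_sort, hU, Finset.card_union_of_disjoint
      (Finset.disjoint_left.mpr (fun {x} hx hx' => (hdisj x hx hx').elim)), hA, hB]
    omega
  obtain ⟨v, ℓ', hvℓ⟩ : ∃ v ℓ', ℓ = v :: ℓ' := by
    cases h : ℓ with
    | nil => rw [h] at hlen; simp at hlen; omega
    | cons v ℓ' => exact ⟨v, ℓ', rfl⟩
  rw [hvℓ] at hsorted hnd hmem hcr hlen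
  have key := gapsum hn hd ℓ' v hsorted hnd (fun w hw => hmem w hw)
  have hplast := pN_le hn ((v :: ℓ').getLast (by simp))
  have hcsum : ((v :: ℓ').map (cN n)).sum ≤ 2 :=
    le_trans (list_csum_le hn (v :: ℓ') U hnd hmem)
      (finset_csum_le hn U)
  have hX : (n - 2*s - 1) * 2 ≤ (n - 2*s - 1) * cross n A (v :: ℓ') :=
    Nat.mul_le_mul_left _ hcr
  simp only [List.length_cons] at hlen
  omega

lemma pN_u1 (hn : 2*s+5 ≤ n) : pN n s (⟨n-2, by omega⟩ : Fin n) = s := by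
  unfold pN; simp

lemma pN_u2 (hn : 2*s+5 ≤ n) : pN n s (⟨n-1, by omega⟩ : Fin n) = n-s-3 := by
  unfold pN; rw [if_neg (by simp; omega), if_pos (by simp)]

lemma cN_path (hn : 2*s+5 ≤ n) {v : Fin n} (h : v.val ≤ n-3) : cN n v = 0 := by
  unfold cN; rw [if_neg (by omega)]

lemma val_split (hn : 2*s+5 ≤ n) (v : Fin n) :
    v = (⟨n-2, by omega⟩ : Fin n) ∨ v = (⟨n-1, by omega⟩ : Fin n) ∨ v.val ≤ n-3 := by
  have := v.isLt
  rcases Nat.lt_or_ge v.val (n-2) with h | h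
  · right; right; omega
  · rcases Nat.lt_or_ge v.val (n-1) with h' | h'
    · left; exact Fin.ext (by show v.val = n-2; omega)
    · right; left; exact Fin.ext (by show v.val = n-1; omega)

/-- the contradiction when all of `A` lies strictly left of all of `B` -/
lemma caseI (hn : 2*s+5 ≤ n) (hs : 1 ≤ s) (hA : A.card = s) (hB : B.card = s)
    (hd : ∀ x ∈ A, ∀ y ∈ B, n - 2*s ≤ fmN n s x y)
    (hdisj : ∀ x, x ∈ A → x ∈ B → False)
    (hlt : ∀ x ∈ A, ∀ y ∈ B, pN n s x < pN n s y) : False := by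
  have hAne : A.Nonempty := Finset.card_pos.mp (by omega)
  obtain ⟨xM, hxM, hmax⟩ := Finset.exists_max_image A (pN n s) hAne
  have hcxM := cN_le (n := n) xM
  -- Step 1 : the pendant u1 is not in B
  have step1 : (⟨n-2, by omega⟩ : Fin n) ∉ B := by
    intro hu1B
    have hApath : ∀ a ∈ A, pN n s a = a.val ∧ a.val ≤ n-3 := by
      intro a ha
      have hlt1 := hlt a ha _ hu1B
      rw [pN_u1 hn] at hlt1
      rcases val_split hn a with rfl | rfl | h
      · rw [pN_u1 hn] at hlt1; omega
      · rw [pN_u2 hn] at hlt1; omega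
      · exact ⟨pN_path h hn, h⟩
    have hcard : A.card ≤ pN n s xM + 1 - 0 := by
      apply card_le_of_val_bounds
      intro a ha
      have := hApath a ha
      have := hmax a ha
      omega
    have hfm := hd xM hxM _ hu1B
    have hltM := hlt xM hxM _ hu1B
    have hc0 : cN n xM = 0 := cN_path hn (hApath xM hxM).2
    have hcu1 : cN n (⟨n-2, by omega⟩ : Fin n) = 1 := by unfold cN; rw [if_pos (by simp)]
    rw [pN_u1 hn] at hltM
    unfold fmN at hfm
    rw [pN_u1 hn, hc0, hcu1] at hfm
    omega
  -- Step 2 : pN xM + 2 ≤ s + cN xM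
  have step2 : pN n s xM + 2 ≤ s + cN n xM := by
    by_cases hu2B : (⟨n-1, by omega⟩ : Fin n) ∈ B
    · have hfm := hd xM hxM _ hu2B
      have hltM := hlt xM hxM _ hu2B
      have hcu2 : cN n (⟨n-1, by omega⟩ : Fin n) = 1 := by
        unfold cN; rw [if_pos (by simp; omega)]
      rw [pN_u2 hn] at hltM
      unfold fmN at hfm
      rw [pN_u2 hn, hcu2] at hfm
      omega
    · have hBpath : ∀ y ∈ B, pN n s y = y.val ∧ y.val ≤ n-3 := by
        intro y hy
        rcases val_split hn y with rfl | rfl | h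
        · exact absurd hy step1
        · exact absurd hy hu2B
        · exact ⟨pN_path h hn, h⟩
      have hBlow : ∀ y ∈ B, pN n s xM + (n - 2*s) ≤ y.val + cN n xM := by
        intro y hy
        have hfm := hd xM hxM y hy
        have hltM := hlt xM hxM y hy
        have hcy : cN n y = 0 := cN_path hn (hBpath y hy).2
        unfold fmN at hfm
        rw [hcy, (hBpath y hy).1] at hfm
        rw [(hBpath y hy).1] at hltM
        omega
      have hcard : B.card ≤ (n-3) + 1 - (pN n s xM + (n - 2*s) - cN n xM) := by
        apply card_le_of_val_bounds
        intro y hy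
        have h1 := hBlow y hy
        have h2 := (hBpath y hy).2
        omega
      omega
  -- Step 3 : xM is a path vertex
  have step3 : cN n xM = 0 := by
    by_contra hc
    have hval : n - 2 ≤ xM.val := by
      unfold cN at hc
      by_contra h
      exact hc (if_neg h)
    rcases val_split hn xM with rfl | rfl | h
    · rw [pN_u1 hn] at step2; omega
    · rw [pN_u2 hn] at step2; omega
    · omega
  -- final contradiction
  rw [step3] at step2
  have hu1A : (⟨n-2, by omega⟩ : Fin n) ∉ A := by
    intro h
    have := hmax _ h
    rw [pN_u1 hn] at this
    omega
  have hu2A : (⟨n-1, by omega⟩ : Fin n) ∉ A := by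
    intro h
    have := hmax _ h
    rw [pN_u2 hn] at this
    omega
  have hcard : A.card ≤ pN n s xM + 1 - 0 := by
    apply card_le_of_val_bounds
    intro a ha
    rcases val_split hn a with rfl | rfl | h
    · exact absurd ha hu1A
    · exact absurd ha hu2A
    · have := hmax a ha
      rw [pN_path h hn] at this
      omega
  omega

lemma pigeon (hn : 2*s+5 ≤ n) (hs : 1 ≤ s) (A B : Finset (Fin n))
    (hA : A.card = s) (hB : B.card = s) :
    ∃ x ∈ A, ∃ y ∈ B, (GG n s).dist x y ≤ n - 2*s - 1 := by
  by_contra hcon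
  push_neg at hcon
  have hd : ∀ x ∈ A, ∀ y ∈ B, n - 2*s ≤ fmN n s x y := by
    intro x hx y hy
    have h1 := hcon x hx y hy
    have h2 := dist_le_fm hn hs x y
    omega
  have hdisj : ∀ x, x ∈ A → x ∈ B → False := by
    intro x hx hx'
    have := hcon x hx x hx'
    rw [SimpleGraph.dist_self] at this
    omega
  rcases dichotomy hn hs hA hB hd hdisj with hlt | hlt
  · exact caseI hn hs hA hB hd hdisj hlt
  · refine caseI (A := B) (B := A) hn hs hB hA ?_ (fun x hx hx' => hdisj x hx' hx)
      (fun y hy x hx => hlt x hx y hy)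
    intro y hy x hx
    rw [fmN_comm]
    exact hd x hx y hy

end Aux19

theorem stmt19 (n s : ℕ) (hs : 1 ≤ s) (hn : 2 * s + 5 ≤ n) :
    condDiam (Tpend2 n (s + 1) (n - s - 2)) s = n - 2 * s - 1 := by
  have hn' : 2*s+5 ≤ n := hn
  have hK_mem : (n - 2*s - 1) ∈ {d | ∃ A B : Finset (Fin n),
      A.card = s ∧ B.card = s ∧ setDist (Tpend2 n (s+1) (n - s - 2)) A B = d} :=
    ⟨Aux19.A0 n s hn', Aux19.B0 n s hn', Aux19.card_A0 hn', Aux19.card_B0 hn',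
      Aux19.setDist_A0_B0 hn' hs⟩
  have hub : ∀ d ∈ {d | ∃ A B : Finset (Fin n),
      A.card = s ∧ B.card = s ∧ setDist (Tpend2 n (s+1) (n - s - 2)) A B = d},
      d ≤ n - 2*s - 1 := by
    rintro d ⟨A, B, hA, hB, rfl⟩
    obtain ⟨x, hx, y, hy, hxy⟩ := Aux19.pigeon hn' hs A B hA hB
    unfold setDist
    exact le_trans (Nat.sInf_le ⟨x, hx, y, hy, rfl⟩) hxy
  unfold condDiam
  exact le_antisymm (csSup_le ⟨_, hK_mem⟩ hub) (le_csSup ⟨_, hub⟩ hK_mem)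
end
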